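/- arXiv:1907.12624 — 15 statements merged into one kernel-verified Lean document; each statement's English description precedes it below -/
import Mathlib

section
/- Let λ, μ, θ be real constants with λ ≠ −1, μ ≠ 0, θ ≠ 1, and let I ⊆ (0, ∞) be an open interval on which (1+λ)k^{1−θ} + μ > 0. Suppose y : I → ℝ is differentiable with y(k) > 0 and y'(k) > 0 on I, and the marginal rate of substitution satisfies R(k) = λk + μk^θ for all k ∈ I. Then there exists a constant ψ > 0 such that y(k) = ψ[(1+λ)k^{1−θ} + μ]^{1/((1+λ)(1−θ))} for all k ∈ I. -/
open Real Set

/-- If the marginal rate of substitution satisfies `R(k) = λk + μk^θ` on an open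
interval `I ⊆ (0, ∞)` on which `(1+λ)k^{1-θ} + μ > 0`, then the per-capita
production function is `y(k) = ψ[(1+λ)k^{1-θ} + μ]^{1/((1+λ)(1-θ))}` for some `ψ > 0`. -/
theorem stmt_0 (lam mu th : ℝ) (hlam : lam ≠ -1) (hmu : mu ≠ 0) (hth : th ≠ 1)
    (p q : ℝ) (hpq : 0 ≤ p) (y : ℝ → ℝ)
    (hbr : ∀ k ∈ Ioo p q, 0 < (1 + lam) * k ^ (1 - th) + mu)
    (hdiff : ∀ k ∈ Ioo p q, DifferentiableAt ℝ y k)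
    (hypos : ∀ k ∈ Ioo p q, 0 < y k)
    (hy' : ∀ k ∈ Ioo p q, 0 < deriv y k)
    (hR : ∀ k ∈ Ioo p q, y k / deriv y k - k = lam * k + mu * k ^ th) :
    ∃ ψ : ℝ, 0 < ψ ∧ ∀ k ∈ Ioo p q,
      y k = ψ * ((1 + lam) * k ^ (1 - th) + mu) ^ (1 / ((1 + lam) * (1 - th))) := by
  rcases isEmpty_or_nonempty (Ioo p q) with he | ⟨⟨k₀, hk₀⟩⟩
  · exact ⟨1, one_pos, fun k hk => absurd ⟨k, hk⟩ (not_nonempty_iff.mpr he)⟩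
  set c : ℝ := 1 / ((1 + lam) * (1 - th)) with hc
  clear_value c
  have hlam' : (1 + lam) ≠ 0 := fun h => hlam (by linarith)
  have hth' : (1 - th) ≠ 0 := fun h => hth (by linarith)
  set B : ℝ → ℝ := fun k => (1 + lam) * k ^ (1 - th) + mu with hB
  set g : ℝ → ℝ := fun k => y k * (B k) ^ (-c) with hg
  -- key: the ODE y = y' * (k^th * B k)
  have hkpos : ∀ k ∈ Ioo p q, (0:ℝ) < k := fun k hk => lt_of_le_of_lt hpq hk.1
  have hode : ∀ k ∈ Ioo p q, y k = deriv y k * (k ^ th * B k) := by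
    intro k hk
    have hk0 := hkpos k hk
    have hmul : k ^ th * k ^ (1 - th) = k := by
      rw [← Real.rpow_add hk0]; simp
    have h1 : k ^ th * B k = (1 + lam) * k + mu * k ^ th := by
      calc k ^ th * B k = (1 + lam) * (k ^ th * k ^ (1 - th)) + mu * k ^ th := by
            simp only [hB]; ring
        _ = (1 + lam) * k + mu * k ^ th := by rw [hmul]
    have h2 := hR k hk
    have hy'0 := (hy' k hk).ne'
    field_simp at h2
    rw [h1]
    nlinarith [h2]
  -- derivative facts
  have hBd : ∀ k ∈ Ioo p q,
      HasDerivAt B ((1 + lam) * ((1 - th) * k ^ (-th))) k := by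
    intro k hk
    have hk0 := hkpos k hk
    have h := (Real.hasDerivAt_rpow_const (x := k) (p := 1 - th) (Or.inl hk0.ne'))
    have h2 := (h.const_mul (1 + lam)).add_const mu
    refine h2.congr_deriv ?_
    ring_nf
  have hgd : ∀ k ∈ Ioo p q, HasDerivAt g 0 k := by
    intro k hk
    have hk0 := hkpos k hk
    have hBpos := hbr k hk
    have hyd := (hdiff k hk).hasDerivAt
    have hBc := (hBd k hk).rpow_const (p := -c) (Or.inl hBpos.ne')
    have h := hyd.mul hBc
    refine h.congr_deriv ?_
    have hcB : c * ((1 + lam) * (1 - th)) = 1 := by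
      rw [hc, one_div, inv_mul_cancel₀ (mul_ne_zero hlam' hth')]
    have hkth : k ^ th * k ^ (-th) = 1 := by
      rw [← Real.rpow_add hk0]; simp
    have hBsplit : B k * B k ^ (-c - 1) = B k ^ (-c) := by
      nth_rewrite 1 [← Real.rpow_one (B k)]
      rw [← Real.rpow_add hBpos]; congr 1; ring
    have key : (k ^ th * B k) * ((1 + lam) * ((1 - th) * k ^ (-th)) * (-c) * B k ^ (-c - 1))
        = -(B k ^ (-c)) := by
      calc (k ^ th * B k) * ((1 + lam) * ((1 - th) * k ^ (-th)) * (-c) * B k ^ (-c - 1))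
          = -(c * ((1 + lam) * (1 - th))) * ((k ^ th * k ^ (-th)) * (B k * B k ^ (-c - 1))) := by
            ring
        _ = -(B k ^ (-c)) := by rw [hcB, hkth, hBsplit]; ring
    linear_combination (deriv y k * key) +
      ((1 + lam) * ((1 - th) * k ^ (-th)) * (-c) * B k ^ (-c - 1)) * hode k hk
  -- g is constant on Ioo p q
  have hconst : ∀ k ∈ Ioo p q, g k = g k₀ := by
    intro k hk
    have hconv : Convex ℝ (Ioo p q) := convex_Ioo p q
    refine hconv.is_const_of_fderivWithin_eq_zero
      (fun x hx => ((hgd x hx).differentiableAt).differentiableWithinAt)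
      (fun x hx => ?_) hk hk₀
    rw [fderivWithin_of_isOpen isOpen_Ioo hx, (hgd x hx).hasFDerivAt.fderiv]
    ext; simp
  have hBk₀pos := hbr k₀ hk₀
  refine ⟨g k₀, mul_pos (hypos k₀ hk₀) (Real.rpow_pos_of_pos hBk₀pos _), ?_⟩
  intro k hk
  have hBpos := hbr k hk
  have := hconst k hk
  have hcancel : (B k) ^ (-c) * (B k) ^ c = 1 := by
    rw [← Real.rpow_add hBpos]; simp
  calc y k = y k * ((B k) ^ (-c) * (B k) ^ c) := by rw [hcancel, mul_one]
    _ = g k * (B k) ^ c := by rw [hg]; ring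
    _ = g k₀ * (B k) ^ c := by rw [this]
end

section
/- Let λ, μ, θ be real constants with λ ≠ −1, μ ≠ 0, θ ≠ 1, let ψ > 0, and let I ⊆ (0, ∞) be an open interval on which (1+λ)k^{1−θ} + μ > 0. Define y(k) = ψ[(1+λ)k^{1−θ} + μ]^{1/((1+λ)(1−θ))}. Then y is differentiable on I with y(k) > 0, and its marginal rate of substitution satisfies R(k) = y(k)/y'(k) − k = λk + μk^θ for all k ∈ I. -/
open Real Set

/-!
Write `u(k) = a k^b + c`, so `y = ψ u^{1/(ab)}`. The chain rule gives
`y' = ψ u^{1/(ab) - 1} k^{b-1}`, the factor `ab` of `u'` cancelling against the exponent;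
hence `y / y' = u k^{1-b} = a k + c k^{1-b}`. With `a = 1 + λ`, `b = 1 - θ`, `c = μ` this is
`(1 + λ) k + μ k^θ`.
-/

noncomputable def ces (ψ a b c : ℝ) (k : ℝ) : ℝ :=
  ψ * (a * k ^ b + c) ^ (1 / (a * b))

section

variable {ψ a b c k : ℝ}

theorem ces_pos (hψ : 0 < ψ) (hu : 0 < a * k ^ b + c) : 0 < ces ψ a b c k :=
  mul_pos hψ (rpow_pos_of_pos hu _)

theorem hasDerivAt_ces (ha : a ≠ 0) (hb : b ≠ 0) (hk : 0 < k) (hu : 0 < a * k ^ b + c) :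
    HasDerivAt (ces ψ a b c) (ψ * (a * k ^ b + c) ^ (1 / (a * b) - 1) * k ^ (b - 1)) k := by
  have hinner : HasDerivAt (fun x : ℝ => a * x ^ b + c) (a * (b * k ^ (b - 1))) k :=
    ((hasDerivAt_rpow_const (Or.inl hk.ne')).const_mul a).add_const c
  refine ((hinner.rpow_const (p := 1 / (a * b)) (Or.inl hu.ne')).const_mul ψ).congr_deriv ?_
  field_simp

theorem ces_div_deriv (hψ : ψ ≠ 0) (hk : 0 < k) (hu : 0 < a * k ^ b + c) :
    ces ψ a b c k / (ψ * (a * k ^ b + c) ^ (1 / (a * b) - 1) * k ^ (b - 1)) =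
      a * k + c * k ^ (1 - b) := by
  have hsplit : (a * k ^ b + c) ^ (1 / (a * b)) =
      (a * k ^ b + c) ^ (1 / (a * b) - 1) * (a * k ^ b + c) := by
    rw [rpow_sub_one hu.ne', div_mul_cancel₀ _ hu.ne']
  have hpow : k * k ^ (b - 1) = k ^ b := by
    rw [mul_comm, ← rpow_add_one hk.ne', sub_add_cancel]
  have hinv : k ^ (1 - b) * k ^ (b - 1) = 1 := by
    rw [← rpow_add hk, sub_add_sub_cancel', sub_self, rpow_zero]
  rw [ces, hsplit, div_eq_iff (by positivity)]
  linear_combination -(ψ * (a * k ^ b + c) ^ (1 / (a * b) - 1)) * (a * hpow + c * hinv)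

end

theorem stmt_1_general (lam mu th ψ : ℝ) (hlam : lam ≠ -1) (hth : th ≠ 1)
    (hψ : 0 < ψ) (p q : ℝ) (hpq : 0 ≤ p) (y : ℝ → ℝ)
    (hy : ∀ k : ℝ, y k = ψ * ((1 + lam) * k ^ (1 - th) + mu) ^ (1 / ((1 + lam) * (1 - th))))
    (hbr : ∀ k ∈ Ioo p q, 0 < (1 + lam) * k ^ (1 - th) + mu) :
    ∀ k ∈ Ioo p q, DifferentiableAt ℝ y k ∧ 0 < y k ∧
      y k / deriv y k - k = lam * k + mu * k ^ th := by
  intro k hk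
  have hk0 : 0 < k := hpq.trans_lt hk.1
  have ha : 1 + lam ≠ 0 := fun h => hlam (by linarith)
  have hb : 1 - th ≠ 0 := sub_ne_zero.mpr hth.symm
  obtain rfl : y = ces ψ (1 + lam) (1 - th) mu := funext hy
  have hderiv := hasDerivAt_ces (ψ := ψ) ha hb hk0 (hbr k hk)
  refine ⟨hderiv.differentiableAt, ces_pos hψ (hbr k hk), ?_⟩
  rw [hderiv.deriv, ces_div_deriv hψ.ne' hk0 (hbr k hk), sub_sub_cancel]
  ring

/-- The function `y(k) = ψ[(1+λ)k^{1-θ} + μ]^{1/((1+λ)(1-θ))}` is differentiable and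
positive on an open interval `I ⊆ (0, ∞)` where `(1+λ)k^{1-θ} + μ > 0`, and its marginal
rate of substitution is `R(k) = y(k)/y'(k) - k = λk + μk^θ`. -/
theorem stmt_1 (lam mu th ψ : ℝ) (hlam : lam ≠ -1) (hmu : mu ≠ 0) (hth : th ≠ 1)
    (hψ : 0 < ψ) (p q : ℝ) (hpq : 0 ≤ p) (y : ℝ → ℝ)
    (hy : ∀ k : ℝ, y k = ψ * ((1 + lam) * k ^ (1 - th) + mu) ^ (1 / ((1 + lam) * (1 - th))))
    (hbr : ∀ k ∈ Ioo p q, 0 < (1 + lam) * k ^ (1 - th) + mu) :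
    ∀ k ∈ Ioo p q, DifferentiableAt ℝ y k ∧ 0 < y k ∧
      y k / deriv y k - k = lam * k + mu * k ^ th :=
  stmt_1_general lam mu th ψ hlam hth hψ p q hpq y hy hbr
end

section
/- Let λ, μ, θ be real constants with λ ≠ −1, μ ≠ 0, θ ≠ 1, λ(θ−1) + θ ≠ 0, and let ψ > 0. Let y(k) = ψ[(1+λ)k^{1−θ} + μ]^{1/((1+λ)(1−θ))} on an open interval I ⊆ (0, ∞) where (1+λ)k^{1−θ} + μ > 0 and y'(k) > 0. Then for all k ∈ I, ln(y(k)) = φω ln(ψ) + φ ln(y'(k)) + φθ ln(k), where φ = 1/(λ(θ−1)+θ) and ω = (1+λ)(θ−1). -/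
open Real Set

/-- For `y(k) = ψ[(1+λ)k^{1-θ} + μ]^{1/((1+λ)(1-θ))}` on an open interval `I ⊆ (0, ∞)`
where the bracket is positive and `y' > 0`, the log-linear relationship
`ln y = φω ln ψ + φ ln y' + φθ ln k` holds, with `φ = 1/(λ(θ-1)+θ)` and
`ω = (1+λ)(θ-1)`. -/
theorem stmt_2 (lam mu th ψ : ℝ) (hlam : lam ≠ -1) (hmu : mu ≠ 0) (hth : th ≠ 1)
    (hden : lam * (th - 1) + th ≠ 0) (hψ : 0 < ψ) (p q : ℝ) (hpq : 0 ≤ p) (y : ℝ → ℝ)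
    (hy : ∀ k : ℝ, y k = ψ * ((1 + lam) * k ^ (1 - th) + mu) ^ (1 / ((1 + lam) * (1 - th))))
    (hbr : ∀ k ∈ Ioo p q, 0 < (1 + lam) * k ^ (1 - th) + mu)
    (hy' : ∀ k ∈ Ioo p q, 0 < deriv y k) :
    ∀ k ∈ Ioo p q,
      Real.log (y k) =
        (1 / (lam * (th - 1) + th)) * ((1 + lam) * (th - 1)) * Real.log ψ
          + (1 / (lam * (th - 1) + th)) * Real.log (deriv y k)
          + (1 / (lam * (th - 1) + th)) * th * Real.log k := by
  intro k hk
  have hk0 : 0 < k := lt_of_le_of_lt hpq hk.1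
  have hB : 0 < (1 + lam) * k ^ (1 - th) + mu := hbr k hk
  have h1 : (1 + lam) ≠ 0 := by
    intro h; apply hlam; linarith
  have h2 : (1 - th) ≠ 0 := sub_ne_zero.mpr (fun h => hth h.symm)
  set c : ℝ := 1 / ((1 + lam) * (1 - th)) with hc
  have hyfun : y = fun k : ℝ => ψ * ((1 + lam) * k ^ (1 - th) + mu) ^ c := funext hy
  have hBder : HasDerivAt (fun k : ℝ => (1 + lam) * k ^ (1 - th) + mu)
      ((1 + lam) * ((1 - th) * k ^ (1 - th - 1))) k := by
    have := (Real.hasDerivAt_rpow_const (p := 1 - th) (Or.inl hk0.ne')).const_mul (1 + lam)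
    simpa using this.add_const mu
  have hyder : HasDerivAt y
      (ψ * (((1 + lam) * ((1 - th) * k ^ (1 - th - 1))) * c *
        ((1 + lam) * k ^ (1 - th) + mu) ^ (c - 1))) k := by
    rw [hyfun]
    exact (hBder.rpow_const (Or.inl hB.ne')).const_mul ψ
  have hDval : deriv y k = ψ * (k ^ (-th) * ((1 + lam) * k ^ (1 - th) + mu) ^ (c - 1)) := by
    rw [hyder.deriv]
    have hexp : (1 : ℝ) - th - 1 = -th := by ring
    rw [hexp]
    field_simp [hc]
    have hc' : c * ((1 + lam) * (1 - th)) = 1 := by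
      rw [hc]; exact one_div_mul_cancel (mul_ne_zero h1 h2)
    linear_combination hc'
  have hBc : ((1 + lam) * k ^ (1 - th) + mu) ^ (c - 1) > 0 := Real.rpow_pos_of_pos hB _
  have hkpow : (0 : ℝ) < k ^ (-th) := Real.rpow_pos_of_pos hk0 _
  have hlogD : Real.log (deriv y k)
      = Real.log ψ + ((-th) * Real.log k + (c - 1) * Real.log ((1 + lam) * k ^ (1 - th) + mu)) := by
    rw [hDval, Real.log_mul hψ.ne' (by positivity), Real.log_mul hkpow.ne' hBc.ne',
      Real.log_rpow hk0, Real.log_rpow hB]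
  have hlogy : Real.log (y k)
      = Real.log ψ + c * Real.log ((1 + lam) * k ^ (1 - th) + mu) := by
    rw [hy k, Real.log_mul hψ.ne' (Real.rpow_pos_of_pos hB _).ne', Real.log_rpow hB]
  rw [hlogy, hlogD, hc]
  field_simp
  ring
end

section
/- Let a > 0, b, c be real constants with b ≠ 0, b ≠ 1, b ≠ c, and let I ⊆ (0, ∞) be an open interval. Suppose y : I → ℝ is differentiable with y(k) > 0 and y'(k) > 0, satisfying the log-linear relationship ln(y(k)) = ln(a) + b ln(y'(k)) + c ln(k) for all k ∈ I. Then there exists a constant ξ such that y(k) = [((1−b)a^{−1/b}/(c−b))·k^{(b−c)/b} + ξ(b−1)/b]^{b/(b−1)} for all k ∈ I. -/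
open Real Set

/-- If `ln y = ln a + b ln y' + c ln k` on an open interval `I ⊆ (0, ∞)`, with
`b ≠ 0`, `b ≠ 1`, `b ≠ c`, then there is a constant `ξ` with
`y(k) = [((1-b)a^{-1/b}/(c-b))k^{(b-c)/b} + ξ(b-1)/b]^{b/(b-1)}` on `I`. -/
theorem stmt_4 (a b c : ℝ) (ha : 0 < a) (hb0 : b ≠ 0) (hb1 : b ≠ 1) (hbc : b ≠ c)
    (p q : ℝ) (hpq : 0 ≤ p) (y : ℝ → ℝ)
    (hdiff : ∀ k ∈ Ioo p q, DifferentiableAt ℝ y k)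
    (hypos : ∀ k ∈ Ioo p q, 0 < y k)
    (hy' : ∀ k ∈ Ioo p q, 0 < deriv y k)
    (hll : ∀ k ∈ Ioo p q,
      Real.log (y k) = Real.log a + b * Real.log (deriv y k) + c * Real.log k) :
    ∃ ξ : ℝ, ∀ k ∈ Ioo p q,
      y k = ((1 - b) * a ^ (-1 / b) / (c - b) * k ^ ((b - c) / b)
              + ξ * (b - 1) / b) ^ (b / (b - 1)) := by
  by_cases hne : (Ioo p q).Nonempty
  swap
  · exact ⟨0, fun k hk => absurd ⟨k, hk⟩ hne⟩
  obtain ⟨k₀, hk₀⟩ := hne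
  have hcb : c - b ≠ 0 := sub_ne_zero.mpr (Ne.symm hbc)
  have hb1' : b - 1 ≠ 0 := sub_ne_zero.mpr hb1
  set C : ℝ := (1 - b) * a ^ (-1 / b) / (c - b) with hC
  set f : ℝ → ℝ := fun k => y k ^ ((b - 1) / b) - C * k ^ ((b - c) / b) with hf
  have hkpos : ∀ k ∈ Ioo p q, (0:ℝ) < k := fun k hk => lt_of_le_of_lt hpq hk.1
  have ha' : (0:ℝ) < a ^ (-1/b : ℝ) := Real.rpow_pos_of_pos ha _
  -- derivative formula
  have hderiv : ∀ k ∈ Ioo p q,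
      deriv y k = a ^ (-1/b : ℝ) * y k ^ (1/b : ℝ) * k ^ (-c/b : ℝ) := by
    intro k hk
    have hy := hypos k hk
    have hk0 := hkpos k hk
    have hd := hy' k hk
    have h1 : Real.log (deriv y k)
        = Real.log (a ^ (-1/b : ℝ) * y k ^ (1/b : ℝ) * k ^ (-c/b : ℝ)) := by
      have hll' := hll k hk
      rw [Real.log_mul (by positivity) (by positivity),
        Real.log_mul (by positivity) (by positivity),
        Real.log_rpow ha, Real.log_rpow hy, Real.log_rpow hk0]
      have hbq : Real.log (deriv y k)
          = (Real.log (y k) - Real.log a - c * Real.log k) / b := by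
        rw [eq_div_iff hb0]; linarith
      rw [hbq]; field_simp; ring
    have h2 := congrArg Real.exp h1
    rwa [Real.exp_log hd, Real.exp_log (by positivity)] at h2
  -- f has derivative 0
  have hfd : ∀ k ∈ Ioo p q, HasDerivAt f 0 k := by
    intro k hk
    have hy := hypos k hk
    have hk0 := hkpos k hk
    have hyd : HasDerivAt y (deriv y k) k := (hdiff k hk).hasDerivAt
    have h1 : HasDerivAt (fun k => y k ^ ((b-1)/b))
        (deriv y k * ((b-1)/b) * y k ^ ((b-1)/b - 1)) k :=
      hyd.rpow_const (Or.inl hy.ne')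
    have h2 : HasDerivAt (fun k : ℝ => C * k ^ ((b-c)/b))
        (C * ((b-c)/b * k ^ ((b-c)/b - 1))) k :=
      (Real.hasDerivAt_rpow_const (Or.inl hk0.ne')).const_mul C
    have h3 := h1.sub h2
    convert h3 using 1
    · rfl
    · rfl
    · rfl
    rw [hderiv k hk]
    have e1 : (b-1)/b - 1 = -1/b := by field_simp; ring
    have e2 : (b-c)/b - 1 = -c/b := by field_simp; ring
    rw [e1, e2]
    have e3 : y k ^ (-1/b : ℝ) * y k ^ (1/b : ℝ) = 1 := by
      rw [← Real.rpow_add hy, show (-1/b + 1/b : ℝ) = 0 by ring, Real.rpow_zero]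
    have key : a ^ (-1/b:ℝ) * y k ^ (1/b:ℝ) * k ^ (-c/b:ℝ) * ((b-1)/b) * y k ^ (-1/b:ℝ)
        = (b-1)/b * a ^ (-1/b:ℝ) * k ^ (-c/b:ℝ) := by
      rw [show a ^ (-1/b:ℝ) * y k ^ (1/b:ℝ) * k ^ (-c/b:ℝ) * ((b-1)/b) * y k ^ (-1/b:ℝ)
          = (b-1)/b * a ^ (-1/b:ℝ) * k ^ (-c/b:ℝ) * (y k ^ (-1/b:ℝ) * y k ^ (1/b:ℝ)) by ring,
        e3, mul_one]
    rw [key, hC]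
    field_simp
    ring
  -- f is constant
  have hconst : ∀ k ∈ Ioo p q, f k = f k₀ := by
    intro k hk
    have hcv : Convex ℝ (Ioo p q) := convex_Ioo p q
    refine hcv.is_const_of_fderivWithin_eq_zero
      (fun x hx => ((hfd x hx).differentiableAt).differentiableWithinAt) ?_ hk hk₀
    intro x hx
    rw [fderivWithin_of_isOpen isOpen_Ioo hx]
    have := (hfd x hx).deriv
    ext
    simp [← toSpanSingleton_deriv, this]
  refine ⟨f k₀ * b / (b-1), fun k hk => ?_⟩
  have hy := hypos k hk
  have hbase : C * k ^ ((b - c) / b) + (f k₀ * b / (b-1)) * (b - 1) / b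
      = y k ^ ((b-1)/b : ℝ) := by
    have h4 := hconst k hk
    have : (f k₀ * b / (b-1)) * (b - 1) / b = f k₀ := by field_simp
    rw [this, ← h4, hf]
    ring
  rw [show ((1 - b) * a ^ (-1 / b) / (c - b) * k ^ ((b - c) / b)
      + (f k₀ * b / (b-1)) * (b - 1) / b) = y k ^ ((b-1)/b : ℝ) from hbase,
    ← Real.rpow_mul hy.le, show (b-1)/b * (b/(b-1)) = 1 by field_simp, Real.rpow_one]
end

section
/- Let a > 0, b, c be real constants with b ≠ 0, and let I ⊆ (0, ∞) be an open interval. Suppose y : I → ℝ is twice differentiable with y(k) > 0, y'(k) > 0, y''(k) ≠ 0, c·y(k) − k·y'(k) ≠ 0, and ln(y(k)) = ln(a) + b ln(y'(k)) + c ln(k) for all k ∈ I. Then the elasticity of factor substitution satisfies σ(k) = b·(y(k) − k·y'(k))/(c·y(k) − k·y'(k)) for all k ∈ I. -/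
open Real Set

/-- If `ln y = ln a + b ln y' + c ln k` on an open interval `I ⊆ (0, ∞)` (with `b ≠ 0`),
then the elasticity of factor substitution
`σ(k) = y'(ky' - y)/(k y y'')` equals `b(y - ky')/(cy - ky')` on `I`. -/
theorem stmt_5 (a b c : ℝ) (ha : 0 < a) (hb0 : b ≠ 0)
    (p q : ℝ) (hpq : 0 ≤ p) (y : ℝ → ℝ)
    (hdiff : ∀ k ∈ Ioo p q, DifferentiableAt ℝ y k)
    (hdiff2 : ∀ k ∈ Ioo p q, DifferentiableAt ℝ (deriv y) k)
    (hypos : ∀ k ∈ Ioo p q, 0 < y k)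
    (hy' : ∀ k ∈ Ioo p q, 0 < deriv y k)
    (hy'' : ∀ k ∈ Ioo p q, deriv (deriv y) k ≠ 0)
    (hden : ∀ k ∈ Ioo p q, c * y k - k * deriv y k ≠ 0)
    (hll : ∀ k ∈ Ioo p q,
      Real.log (y k) = Real.log a + b * Real.log (deriv y k) + c * Real.log k) :
    ∀ k ∈ Ioo p q,
      deriv y k * (k * deriv y k - y k) / (k * y k * deriv (deriv y) k)
        = b * (y k - k * deriv y k) / (c * y k - k * deriv y k) := by
  intro k hk
  have hk0 : 0 < k := lt_of_le_of_lt hpq hk.1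
  have hyk : y k ≠ 0 := (hypos k hk).ne'
  have hy'k : deriv y k ≠ 0 := (hy' k hk).ne'
  have hy''k := hy'' k hk
  have hdenk := hden k hk
  -- derivatives of both sides of the log equation
  have h1 : HasDerivAt (fun x => Real.log (y x)) ((y k)⁻¹ * deriv y k) k :=
    (Real.hasDerivAt_log hyk).comp k (hdiff k hk).hasDerivAt
  have h2 : HasDerivAt
      (fun x => Real.log a + b * Real.log (deriv y x) + c * Real.log x)
      (b * ((deriv y k)⁻¹ * deriv (deriv y) k) + c * k⁻¹) k := by
    have h2a : HasDerivAt (fun x => Real.log (deriv y x))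
        ((deriv y k)⁻¹ * deriv (deriv y) k) k :=
      (Real.hasDerivAt_log hy'k).comp k (hdiff2 k hk).hasDerivAt
    have h2b : HasDerivAt (fun x => Real.log a + b * Real.log (deriv y x))
        (0 + b * ((deriv y k)⁻¹ * deriv (deriv y) k)) k :=
      (hasDerivAt_const k (Real.log a)).add (h2a.const_mul b)
    have := h2b.add ((Real.hasDerivAt_log hk0.ne').const_mul c)
    simp only [zero_add] at this
    exact this
  -- the two functions agree near k
  have heq : (fun x => Real.log (y x)) =ᶠ[nhds k]
      (fun x => Real.log a + b * Real.log (deriv y x) + c * Real.log x) := by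
    filter_upwards [isOpen_Ioo.mem_nhds hk] with x hx using hll x hx
  have hDeriv : (y k)⁻¹ * deriv y k
      = b * ((deriv y k)⁻¹ * deriv (deriv y) k) + c * k⁻¹ := by
    have := h1.deriv ▸ h2.deriv ▸ Filter.EventuallyEq.deriv_eq heq
    rw [← h1.deriv, ← h2.deriv]
    exact Filter.EventuallyEq.deriv_eq heq
  field_simp at hDeriv
  rw [div_eq_div_iff (by positivity) hdenk]
  linear_combination (y k - k * deriv y k) * hDeriv
end

section
/- Let a > 0, b, c, ξ be real constants with b ≠ 0, b ≠ 1, b ≠ c, and let I ⊆ (0, ∞) be an open interval on which ((1−b)a^{−1/b}/(c−b))·k^{(b−c)/b} + ξ(b−1)/b > 0. Define y(k) = [((1−b)a^{−1/b}/(c−b))·k^{(b−c)/b} + ξ(b−1)/b]^{b/(b−1)}. Then, wherever y'(k) > 0, the marginal rate of substitution satisfies R(k) = y(k)/y'(k) − k = ((1−c)/(c−b))·k − (ξ(1−b)a^{1/b}/b)·k^{c/b}, and its derivative satisfies R'(k) = (1−c)/(c−b) − (ξc(1−b)a^{1/b}/b²)·k^{c/b − 1}. -/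
open Real Set

lemma aux_hasDeriv (A B e m x : ℝ) (hx : 0 < x) (hu : 0 < A * x ^ e + B) :
    HasDerivAt (fun t : ℝ => (A * t ^ e + B) ^ m)
      (A * (e * x ^ (e - 1)) * m * (A * x ^ e + B) ^ (m - 1)) x := by
  have h1 : HasDerivAt (fun t : ℝ => t ^ e) (e * x ^ (e - 1)) x :=
    Real.hasDerivAt_rpow_const (Or.inl hx.ne')
  exact ((h1.const_mul A).add_const B).rpow_const (Or.inl hu.ne')

/-- For `y(k) = [((1-b)a^{-1/b}/(c-b))k^{(b-c)/b} + ξ(b-1)/b]^{b/(b-1)}` on an open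
interval `I ⊆ (0, ∞)` where the bracket is positive, wherever `y'(k) > 0`, the marginal
rate of substitution is `R(k) = ((1-c)/(c-b))k - (ξ(1-b)a^{1/b}/b)k^{c/b}`, with derivative
`R'(k) = (1-c)/(c-b) - (ξc(1-b)a^{1/b}/b²)k^{c/b - 1}`. -/
theorem stmt_6 (a b c ξ : ℝ) (ha : 0 < a) (hb0 : b ≠ 0) (hb1 : b ≠ 1) (hbc : b ≠ c)
    (p q : ℝ) (hpq : 0 ≤ p) (y : ℝ → ℝ)
    (hy : ∀ k : ℝ, y k = ((1 - b) * a ^ (-1 / b) / (c - b) * k ^ ((b - c) / b)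
            + ξ * (b - 1) / b) ^ (b / (b - 1)))
    (hbr : ∀ k ∈ Ioo p q,
      0 < (1 - b) * a ^ (-1 / b) / (c - b) * k ^ ((b - c) / b) + ξ * (b - 1) / b) :
    ∀ k ∈ Ioo p q, 0 < deriv y k →
      y k / deriv y k - k
          = (1 - c) / (c - b) * k - ξ * (1 - b) * a ^ (1 / b) / b * k ^ (c / b) ∧
      deriv (fun k => y k / deriv y k - k) k
          = (1 - c) / (c - b) - ξ * c * (1 - b) * a ^ (1 / b) / b ^ 2 * k ^ (c / b - 1) := by
  have hb1' : b - 1 ≠ 0 := sub_ne_zero.mpr hb1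
  have hcb : c - b ≠ 0 := sub_ne_zero.mpr (Ne.symm hbc)
  set A := (1 - b) * a ^ (-1 / b) / (c - b) with hAdef
  set B := ξ * (b - 1) / b with hBdef
  set e := (b - c) / b with hedef
  set m := b / (b - 1) with hmdef
  have ha' : a ^ (-1 / b) = (a ^ (1 / b))⁻¹ := by
    rw [show (-1 / b : ℝ) = -(1 / b) by ring, Real.rpow_neg ha.le]
  have haa : a ^ (-1 / b) * a ^ (1 / b) = 1 := by
    rw [← Real.rpow_add ha, show (-1 / b + 1 / b : ℝ) = 0 by ring, Real.rpow_zero]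
  have hapos : (0:ℝ) < a ^ (1 / b) := Real.rpow_pos_of_pos ha _
  intro k hk _hpos
  have key : ∀ x ∈ Ioo p q, y x / deriv y x - x
      = (1 - c) / (c - b) * x - ξ * (1 - b) * a ^ (1 / b) / b * x ^ (c / b) := by
    intro x hx
    have hx0 : 0 < x := lt_of_le_of_lt hpq hx.1
    have hu : 0 < A * x ^ e + B := hbr x hx
    have hyfun : y = fun t : ℝ => (A * t ^ e + B) ^ m := funext fun t => hy t
    have hmae : m * A * e = a ^ (-1 / b) := by
      rw [hmdef, hAdef, hedef]
      field_simp
      ring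
    have hD : deriv y x = a ^ (-1 / b) * (A * x ^ e + B) ^ (m - 1) * x ^ (e - 1) := by
      rw [hyfun, (aux_hasDeriv A B e m x hx0 hu).deriv, ← hmae]
      ring
    have hxe : x ^ e * x ^ (c / b) = x := by
      rw [← Real.rpow_add hx0, show e + c / b = 1 by rw [hedef]; field_simp; ring,
        Real.rpow_one]
    have he1 : x ^ (e - 1) = (x ^ (c / b))⁻¹ := by
      rw [show e - 1 = -(c / b) by rw [hedef]; field_simp; ring, Real.rpow_neg hx0.le]
    have hupow : (0:ℝ) < (A * x ^ e + B) ^ (m - 1) := Real.rpow_pos_of_pos hu _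
    have hxcb : (0:ℝ) < x ^ (c / b) := Real.rpow_pos_of_pos hx0 _
    have hum : (A * x ^ e + B) ^ m = (A * x ^ e + B) ^ (m - 1) * (A * x ^ e + B) := by
      rw [← Real.rpow_add_one hu.ne' (m - 1), show m - 1 + 1 = m by ring]
    have hstep : y x / deriv y x = (A * x ^ e + B) * a ^ (1 / b) * x ^ (c / b) := by
      rw [hy x, hD, hum, ha', he1]
      field_simp
    rw [hstep, hAdef, hBdef]
    have hexp : ((1 - b) * a ^ (-1 / b) / (c - b) * x ^ e + ξ * (b - 1) / b)
        * a ^ (1 / b) * x ^ (c / b)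
        = (1 - b) / (c - b) * (a ^ (-1 / b) * a ^ (1 / b)) * (x ^ e * x ^ (c / b))
          + ξ * (b - 1) / b * a ^ (1 / b) * x ^ (c / b) := by ring
    rw [hexp, haa, hxe]
    field_simp
    ring
  refine ⟨key k hk, ?_⟩
  have hk0 : 0 < k := lt_of_le_of_lt hpq hk.1
  have hev : (fun x => y x / deriv y x - x)
      =ᶠ[nhds k] fun x => (1 - c) / (c - b) * x - ξ * (1 - b) * a ^ (1 / b) / b * x ^ (c / b) := by
    filter_upwards [Ioo_mem_nhds hk.1 hk.2] with x hx using key x hx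
  rw [hev.deriv_eq]
  have h1 : HasDerivAt (fun x : ℝ => x ^ (c / b)) (c / b * k ^ (c / b - 1)) k :=
    Real.hasDerivAt_rpow_const (Or.inl hk0.ne')
  have h2 : HasDerivAt
      (fun x : ℝ => (1 - c) / (c - b) * x - ξ * (1 - b) * a ^ (1 / b) / b * x ^ (c / b))
      ((1 - c) / (c - b) * 1 - ξ * (1 - b) * a ^ (1 / b) / b * (c / b * k ^ (c / b - 1))) k :=
    ((hasDerivAt_id' k).const_mul _).sub (h1.const_mul _)
  rw [h2.deriv]
  field_simp
end

section
/- Let a > 0, b, c, ξ be real constants with b ≠ 0, b ≠ 1, b ≠ c, and let I ⊆ (0, ∞) be an open interval on which ((1−b)a^{−1/b}/(c−b))·k^{(b−c)/b} + ξ(b−1)/b > 0. Define y(k) = [((1−b)a^{−1/b}/(c−b))·k^{(b−c)/b} + ξ(b−1)/b]^{b/(b−1)}. Then, wherever y'(k) > 0, y''(k) ≠ 0 and the denominator below is nonzero, the elasticity of factor substitution satisfies σ(k) = b·[b(1−c)k − ξ(1−b)(c−b)a^{1/b}k^{c/b}] / [b²(1−c)k − ξc(1−b)(c−b)a^{1/b}k^{c/b}].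 -/
open Real Set

set_option maxHeartbeats 2000000 in
private lemma stmt7_key (b c ξ k : ℝ) (e α T U v R : ℝ)
    (hT : T ≠ 0) (hU : U ≠ 0) (hv : v ≠ 0) (hR : R ≠ 0)
    (hb0 : b ≠ 0) (hb1' : b - 1 ≠ 0) (hcb : c - b ≠ 0) (hk0 : k ≠ 0)
    (hveq : v = ((1 - b) * b * T + ξ * (b - 1) * (c - b) * R) / (b * (c - b) * R))
    (he : e = b / (b - 1)) (hα : α = (b - c) / b) :
    e * (U / v) * ((1 - b) * R⁻¹ / (c - b) * (α * (T / k))) *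
        (k * (e * (U / v) * ((1 - b) * R⁻¹ / (c - b) * (α * (T / k)))) - U) *
        (b ^ 2 * (1 - c) * k - ξ * c * (1 - b) * (c - b) * R * (k / T)) =
      b * (b * (1 - c) * k - ξ * (1 - b) * (c - b) * R * (k / T)) *
        (k * U * (e * ((e - 1) * (U / v / v) * ((1 - b) * R⁻¹ / (c - b) * (α * (T / k))) *
            ((1 - b) * R⁻¹ / (c - b) * (α * (T / k))) +
          U / v * ((1 - b) * R⁻¹ / (c - b) * (α * ((α - 1) * (T / k / k))))))) := by
  have hN : (1 - b) * b * T + ξ * (b - 1) * (c - b) * R ≠ 0 := by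
    intro h
    exact hv (by rw [hveq, h, zero_div])
  rw [he, hα]
  field_simp
  subst hveq
  field_simp
  ring

set_option maxHeartbeats 1000000 in
/-- For `y(k) = [((1-b)a^{-1/b}/(c-b))k^{(b-c)/b} + ξ(b-1)/b]^{b/(b-1)}` on an open
interval `I ⊆ (0, ∞)` where the bracket is positive, wherever `y' > 0`, `y'' ≠ 0` and the
denominator is nonzero, the elasticity of substitution is
`σ(k) = b[b(1-c)k - ξ(1-b)(c-b)a^{1/b}k^{c/b}]/[b²(1-c)k - ξc(1-b)(c-b)a^{1/b}k^{c/b}]`. -/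
theorem stmt_7 (a b c ξ : ℝ) (ha : 0 < a) (hb0 : b ≠ 0) (hb1 : b ≠ 1) (hbc : b ≠ c)
    (p q : ℝ) (hpq : 0 ≤ p) (y : ℝ → ℝ)
    (hy : ∀ k : ℝ, y k = ((1 - b) * a ^ (-1 / b) / (c - b) * k ^ ((b - c) / b)
            + ξ * (b - 1) / b) ^ (b / (b - 1)))
    (hbr : ∀ k ∈ Ioo p q,
      0 < (1 - b) * a ^ (-1 / b) / (c - b) * k ^ ((b - c) / b) + ξ * (b - 1) / b) :
    ∀ k ∈ Ioo p q, 0 < deriv y k → deriv (deriv y) k ≠ 0 →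
      b ^ 2 * (1 - c) * k - ξ * c * (1 - b) * (c - b) * a ^ (1 / b) * k ^ (c / b) ≠ 0 →
      deriv y k * (k * deriv y k - y k) / (k * y k * deriv (deriv y) k)
        = b * (b * (1 - c) * k - ξ * (1 - b) * (c - b) * a ^ (1 / b) * k ^ (c / b)) /
            (b ^ 2 * (1 - c) * k - ξ * c * (1 - b) * (c - b) * a ^ (1 / b) * k ^ (c / b)) := by
  intro k hk hy1pos hy2ne hden
  set A : ℝ := (1 - b) * a ^ (-1 / b) / (c - b) with hA
  set α : ℝ := (b - c) / b with hα
  set β : ℝ := ξ * (b - 1) / b with hβ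
  set e : ℝ := b / (b - 1) with he
  have hk0 : 0 < k := lt_of_le_of_lt hpq hk.1
  -- the inner function
  set u : ℝ → ℝ := fun x => A * x ^ α + β with hu
  have hyu : ∀ x : ℝ, y x = u x ^ e := fun x => hy x
  -- derivative of u at any x > 0
  have hud : ∀ x : ℝ, 0 < x → HasDerivAt u (A * (α * x ^ (α - 1))) x := by
    intro x hx
    exact ((Real.hasDerivAt_rpow_const (p := α) (Or.inl hx.ne')).const_mul A).add_const β
  -- derivative of y on Ioo p q
  have hyd : ∀ x ∈ Ioo p q, HasDerivAt y (e * u x ^ (e - 1) * (A * (α * x ^ (α - 1)))) x := by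
    intro x hx
    have hx0 : 0 < x := lt_of_le_of_lt hpq hx.1
    have hf := (hud x hx0).rpow_const (p := e) (Or.inl (hbr x hx).ne')
    have hyf : y = fun x => u x ^ e := funext hyu
    rw [hyf]
    convert hf using 1
    ring
  have hderiv_eq : ∀ x ∈ Ioo p q, deriv y x = e * u x ^ (e - 1) * (A * (α * x ^ (α - 1))) :=
    fun x hx => (hyd x hx).deriv
  set y1 : ℝ → ℝ := fun x => e * (u x ^ (e - 1) * (A * (α * x ^ (α - 1)))) with hy1def
  have hEq : deriv y =ᶠ[nhds k] y1 := by
    filter_upwards [isOpen_Ioo.mem_nhds hk] with x hx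
    rw [hderiv_eq x hx, hy1def]; ring
  have hy1d : HasDerivAt y1
      (e * (((e - 1) * u k ^ (e - 1 - 1) * (A * (α * k ^ (α - 1)))) * (A * (α * k ^ (α - 1)))
        + u k ^ (e - 1) * (A * (α * ((α - 1) * k ^ (α - 1 - 1)))))) k := by
    have h1 : HasDerivAt (fun x => u x ^ (e - 1))
        ((e - 1) * u k ^ (e - 1 - 1) * (A * (α * k ^ (α - 1)))) k := by
      have := (hud k hk0).rpow_const (p := e - 1) (Or.inl (hbr k hk).ne')
      convert this using 1
      ring
    have h2 : HasDerivAt (fun x : ℝ => A * (α * x ^ (α - 1)))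
        (A * (α * ((α - 1) * k ^ (α - 1 - 1)))) k := by
      have := ((Real.hasDerivAt_rpow_const (p := α - 1) (Or.inl hk0.ne')).const_mul α).const_mul A
      exact this
    exact (h1.mul h2).const_mul e
  have heq2 : deriv (deriv y) k
      = e * (((e - 1) * u k ^ (e - 1 - 1) * (A * (α * k ^ (α - 1)))) * (A * (α * k ^ (α - 1)))
        + u k ^ (e - 1) * (A * (α * ((α - 1) * k ^ (α - 1 - 1))))) := by
    rw [hEq.deriv_eq]; exact hy1d.deriv
  -- nonzeroness facts
  have hu0 : 0 < u k := hbr k hk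
  have hU0 : (0:ℝ) < u k ^ e := Real.rpow_pos_of_pos hu0 e
  have hT0 : (0:ℝ) < k ^ α := Real.rpow_pos_of_pos hk0 α
  have hR0 : (0:ℝ) < a ^ (1 / b) := Real.rpow_pos_of_pos ha _
  have hb1' : b - 1 ≠ 0 := sub_ne_zero.mpr hb1
  have hcb : c - b ≠ 0 := sub_ne_zero.mpr (Ne.symm hbc)
  -- rpow identities
  have hS : k ^ (c / b) = k / k ^ α := by
    rw [eq_div_iff hT0.ne', ← Real.rpow_add hk0]
    rw [show c / b + α = 1 by rw [hα]; field_simp; ring, Real.rpow_one]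
  have hRinv : a ^ (-1 / b) = (a ^ (1 / b))⁻¹ := by
    rw [neg_div, Real.rpow_neg ha.le]
  have hue1 : u k ^ (e - 1) = u k ^ e / u k := by
    rw [Real.rpow_sub hu0, Real.rpow_one]
  have hue2 : u k ^ (e - 1 - 1) = u k ^ e / u k / u k := by
    rw [Real.rpow_sub hu0, Real.rpow_sub hu0, Real.rpow_one]
  have hkα1 : k ^ (α - 1) = k ^ α / k := by
    rw [Real.rpow_sub hk0, Real.rpow_one]
  have hkα2 : k ^ (α - 1 - 1) = k ^ α / k / k := by
    rw [Real.rpow_sub hk0, Real.rpow_sub hk0, Real.rpow_one]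
  rw [heq2] at hy2ne ⊢
  rw [hderiv_eq k hk, hyu k]
  rw [div_eq_div_iff (by
      refine mul_ne_zero (mul_ne_zero hk0.ne' hU0.ne') hy2ne) hden]
  have key := fun (T U v R : ℝ) hT hU hv hR hveq =>
    stmt7_key b c ξ k e α T U v R hT hU hv hR hb0 hb1' hcb hk0.ne' hveq he hα
  rw [hue1, hue2, hkα1, hkα2, hS]
  rw [show A = (1 - b) * (a ^ (1 / b))⁻¹ / (c - b) by rw [hA, hRinv]]
  exact key (k ^ α) (u k ^ e) (u k) (a ^ (1 / b)) hT0.ne' hU0.ne' hu0.ne' hR0.ne'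
    (by
      rw [show u k = A * k ^ α + β from rfl, hA, hβ, hRinv]
      field_simp)
end

section
/- Let a > 0, ξ < 0, and 0 < b < c < 1. Define σ(k) = b·[b(1−c)k − ξ(1−b)(c−b)a^{1/b}k^{c/b}] / [b²(1−c)k − ξc(1−b)(c−b)a^{1/b}k^{c/b}] for k > 0. Then σ'(k) < 0 for all k > 0 (where σ is defined), and σ(k) tends to b/c as k → ∞. -/
open Real Set Filter

/-- Case `0 < b < c < 1`, `ξ < 0`: the elasticity of substitution `σ` is decreasing
(`σ' < 0` wherever defined on `k > 0`) and `σ(k) → b/c` as `k → ∞`. -/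
theorem stmt_9 (a b c ξ : ℝ) (ha : 0 < a) (hξ : ξ < 0)
    (hb : 0 < b) (hbc : b < c) (hc : c < 1)
    (σ : ℝ → ℝ)
    (hσ : ∀ k : ℝ, σ k =
      b * (b * (1 - c) * k - ξ * (1 - b) * (c - b) * a ^ (1 / b) * k ^ (c / b)) /
        (b ^ 2 * (1 - c) * k - ξ * c * (1 - b) * (c - b) * a ^ (1 / b) * k ^ (c / b))) :
    (∀ k : ℝ, 0 < k →
      b ^ 2 * (1 - c) * k - ξ * c * (1 - b) * (c - b) * a ^ (1 / b) * k ^ (c / b) ≠ 0 →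
      deriv σ k < 0) ∧
    Tendsto σ atTop (nhds (b / c)) := by
  have hb1 : b < 1 := hbc.trans hc
  obtain ⟨P, hP⟩ : ∃ P : ℝ, P = b * (1 - c) := ⟨_, rfl⟩
  obtain ⟨Q, hQ⟩ : ∃ Q : ℝ, Q = ξ * (1 - b) * (c - b) * a ^ (1 / b) := ⟨_, rfl⟩
  have hPpos : 0 < P := hP ▸ mul_pos hb (by linarith)
  have hQneg : Q < 0 := by
    have h0 : (0:ℝ) < a ^ (1/b) := rpow_pos_of_pos ha _
    have h1 : ξ * (1 - b) < 0 := mul_neg_of_neg_of_pos hξ (by linarith)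
    have h2 : ξ * (1 - b) * (c - b) < 0 := mul_neg_of_neg_of_pos h1 (by linarith)
    exact hQ ▸ mul_neg_of_neg_of_pos h2 h0
  have hσ' : σ = fun k : ℝ => b * (P * k - Q * k ^ (c/b)) /
      (b * P * k - c * Q * k ^ (c/b)) := by
    funext k; rw [hσ, hP, hQ]; ring_nf
  have hbne : b ≠ 0 := hb.ne'
  constructor
  · intro k hk _
    have hkne : k ≠ 0 := hk.ne'
    have hupos : (0:ℝ) < k ^ (c/b - 1) := rpow_pos_of_pos hk _
    have hwpos : (0:ℝ) < k ^ (c/b) := rpow_pos_of_pos hk _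
    have hpow : k ^ (c/b) = k ^ (c/b - 1) * k := by
      rw [← Real.rpow_add_one hkne, sub_add_cancel]
    -- denominator positive
    have hgpos : 0 < b * P * k - c * Q * k ^ (c/b) := by
      have h1 : 0 < b * P * k := by positivity
      have h2 : c * Q * k ^ (c/b) < 0 :=
        mul_neg_of_neg_of_pos (mul_neg_of_pos_of_neg (hb.trans hbc) hQneg) hwpos
      linarith
    have hu : HasDerivAt (fun x : ℝ => x ^ (c/b)) ((c/b) * k ^ (c/b - 1)) k :=
      Real.hasDerivAt_rpow_const (Or.inl hkne)
    have hf : HasDerivAt (fun x : ℝ => b * (P * x - Q * x ^ (c/b)))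
        (b * (P - Q * ((c/b) * k ^ (c/b - 1)))) k := by
      have h1 := ((hasDerivAt_id k).const_mul P).sub (hu.const_mul Q)
      have h2 := h1.const_mul b
      exact h2.congr_deriv (by ring)
    have hg : HasDerivAt (fun x : ℝ => b * P * x - c * Q * x ^ (c/b))
        (b * P - c * Q * ((c/b) * k ^ (c/b - 1))) k := by
      have h1 := ((hasDerivAt_id k).const_mul (b * P)).sub (hu.const_mul (c * Q))
      exact h1.congr_deriv (by ring)
    have hd := (hf.div hg hgpos.ne').deriv
    rw [hσ']
    change deriv ((fun x => b * (P * x - Q * x ^ (c / b))) / fun x => b * P * x - c * Q * x ^ (c / b)) k < 0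
    rw [hd]
    apply div_neg_of_neg_of_pos
    · rw [hpow]
      have hnum : b * (P - Q * ((c/b) * k ^ (c/b - 1))) *
            (b * P * k - c * Q * (k ^ (c/b - 1) * k)) -
          b * (P * k - Q * (k ^ (c/b - 1) * k)) *
            (b * P - c * Q * ((c/b) * k ^ (c/b - 1))) =
          Q * (P * k ^ (c/b - 1) * k * (c - b) ^ 2) := by
        field_simp
        ring
      rw [hnum]
      have hpos : 0 < P * k ^ (c/b - 1) * k * (c - b) ^ 2 := by
        have : 0 < (c - b) ^ 2 := pow_pos (by linarith) 2
        positivity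
      exact mul_neg_of_neg_of_pos hQneg hpos
    · positivity
  · have he : 1 < c / b := (one_lt_div hb).mpr hbc
    have h0 : Tendsto (fun k : ℝ => k ^ (1 - c/b)) atTop (nhds 0) := by
      have := tendsto_rpow_neg_atTop (by linarith : (0:ℝ) < c/b - 1)
      simpa [neg_sub] using this
    have hcQ : b * P * 0 - c * Q ≠ 0 := by
      have : c * Q < 0 := mul_neg_of_pos_of_neg (hb.trans hbc) hQneg
      simp only [mul_zero, zero_sub]
      intro h; rw [neg_eq_zero] at h; linarith
    have hτ : Tendsto (fun k : ℝ => b * (P * k ^ (1 - c/b) - Q) /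
        (b * P * k ^ (1 - c/b) - c * Q)) atTop
        (nhds (b * (P * 0 - Q) / (b * P * 0 - c * Q))) := by
      apply Tendsto.div
      · exact ((h0.const_mul P).sub tendsto_const_nhds).const_mul b
      · exact ((h0.const_mul (b * P)).sub tendsto_const_nhds)
      · exact hcQ
    have hval : b * (P * 0 - Q) / (b * P * 0 - c * Q) = b / c := by
      have hcne : c ≠ 0 := (hb.trans hbc).ne'
      field_simp [hQneg.ne]
      ring
    have heq : σ =ᶠ[atTop] fun k : ℝ => b * (P * k ^ (1 - c/b) - Q) /
        (b * P * k ^ (1 - c/b) - c * Q) := by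
      filter_upwards [eventually_gt_atTop 0] with k hk
      rw [hσ']
      have hwpos : (0:ℝ) < k ^ (c/b) := rpow_pos_of_pos hk _
      have hw : k ^ (1 - c/b) = k / k ^ (c/b) := by
        rw [Real.rpow_sub hk, Real.rpow_one]
      rw [hw]
      have hd1 : b * P * k - c * Q * k ^ (c/b) ≠ 0 := by
        have h1 : 0 < b * P * k := by positivity
        have h2 : c * Q * k ^ (c/b) < 0 :=
          mul_neg_of_neg_of_pos (mul_neg_of_pos_of_neg (hb.trans hbc) hQneg) hwpos
        intro h; linarith [h.ge]
      have hd2 : b * P * (k / k ^ (c/b)) - c * Q ≠ 0 := by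
        have h1 : 0 < b * P * (k / k ^ (c/b)) := by positivity
        have h2 : c * Q < 0 := mul_neg_of_pos_of_neg (hb.trans hbc) hQneg
        intro h; linarith [h.ge]
      rw [div_eq_div_iff hd1 hd2]
      field_simp
    have := hτ.congr' heq.symm
    rwa [hval] at this
end

section
/- Let a > 0, ξ < 0, and 0 < c < b < 1. Define σ(k) = b·[b(1−c)k − ξ(1−b)(c−b)a^{1/b}k^{c/b}] / [b²(1−c)k − ξc(1−b)(c−b)a^{1/b}k^{c/b}] for k > 0. Then σ'(k) > 0 for all k > 0 (where σ is defined), and σ(k) tends to 1 as k → ∞. -/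
open Real Set Filter

/-- Case `0 < c < b < 1`, `ξ < 0`: the elasticity of substitution `σ` is increasing
(`σ' > 0` wherever defined on `k > 0`) and `σ(k) → 1` as `k → ∞`. -/
theorem stmt_10 (a b c ξ : ℝ) (ha : 0 < a) (hξ : ξ < 0)
    (hc : 0 < c) (hcb : c < b) (hb : b < 1)
    (σ : ℝ → ℝ)
    (hσ : ∀ k : ℝ, σ k =
      b * (b * (1 - c) * k - ξ * (1 - b) * (c - b) * a ^ (1 / b) * k ^ (c / b)) /
        (b ^ 2 * (1 - c) * k - ξ * c * (1 - b) * (c - b) * a ^ (1 / b) * k ^ (c / b))) :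
    (∀ k : ℝ, 0 < k →
      b ^ 2 * (1 - c) * k - ξ * c * (1 - b) * (c - b) * a ^ (1 / b) * k ^ (c / b) ≠ 0 →
      0 < deriv σ k) ∧
    Tendsto σ atTop (nhds 1) := by
  have hb0 : 0 < b := hc.trans hcb
  have haR : 0 < a ^ (1 / b) := Real.rpow_pos_of_pos ha _
  have hD : 0 < ξ * (1 - b) * (c - b) * a ^ (1 / b) := by
    have h1 : ξ * (1 - b) < 0 := mul_neg_of_neg_of_pos hξ (by linarith)
    have h2 : (0:ℝ) < ξ * (1 - b) * (c - b) :=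
      mul_pos_of_neg_of_neg h1 (by linarith)
    exact mul_pos h2 haR
  have hσf : σ = fun k : ℝ =>
      b * (b * (1 - c) * k - ξ * (1 - b) * (c - b) * a ^ (1 / b) * k ^ (c / b)) /
        (b ^ 2 * (1 - c) * k - ξ * c * (1 - b) * (c - b) * a ^ (1 / b) * k ^ (c / b)) :=
    funext hσ
  constructor
  · intro k hk hM
    have hpow : HasDerivAt (fun x : ℝ => x ^ (c / b))
        (c / b * k ^ (c / b - 1)) k :=
      Real.hasDerivAt_rpow_const (Or.inl hk.ne')
    have hN : HasDerivAt (fun x : ℝ =>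
        b * (b * (1 - c) * x - ξ * (1 - b) * (c - b) * a ^ (1 / b) * x ^ (c / b)))
        (b * (b * (1 - c) - ξ * (1 - b) * (c - b) * a ^ (1 / b) * (c / b * k ^ (c / b - 1)))) k := by
      have h1 : HasDerivAt (fun x : ℝ => b * (1 - c) * x) (b * (1 - c)) k := by
        simpa using (hasDerivAt_id k).const_mul (b * (1 - c))
      exact ((h1.sub (hpow.const_mul (ξ * (1 - b) * (c - b) * a ^ (1 / b)))).const_mul b)
    have hMd : HasDerivAt (fun x : ℝ =>
        b ^ 2 * (1 - c) * x - ξ * c * (1 - b) * (c - b) * a ^ (1 / b) * x ^ (c / b))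
        (b ^ 2 * (1 - c) - ξ * c * (1 - b) * (c - b) * a ^ (1 / b) * (c / b * k ^ (c / b - 1))) k := by
      have h1 : HasDerivAt (fun x : ℝ => b ^ 2 * (1 - c) * x) (b ^ 2 * (1 - c)) k := by
        simpa using (hasDerivAt_id k).const_mul (b ^ 2 * (1 - c))
      exact h1.sub (hpow.const_mul (ξ * c * (1 - b) * (c - b) * a ^ (1 / b)))
    have hdiv := hN.div hMd hM
    rw [hσf, (show HasDerivAt (fun k : ℝ =>
        b * (b * (1 - c) * k - ξ * (1 - b) * (c - b) * a ^ (1 / b) * k ^ (c / b)) /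
          (b ^ 2 * (1 - c) * k - ξ * c * (1 - b) * (c - b) * a ^ (1 / b) * k ^ (c / b))) _ k
        from hdiv).deriv]
    apply div_pos
    · -- numerator
      have hq : k ^ (c / b - 1) = k ^ (c / b) / k := by
        rw [Real.rpow_sub hk, Real.rpow_one]
      have hkey : b * (b * (1 - c) - ξ * (1 - b) * (c - b) * a ^ (1 / b) * (c / b * k ^ (c / b - 1))) *
            (b ^ 2 * (1 - c) * k - ξ * c * (1 - b) * (c - b) * a ^ (1 / b) * k ^ (c / b)) -
          b * (b * (1 - c) * k - ξ * (1 - b) * (c - b) * a ^ (1 / b) * k ^ (c / b)) *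
            (b ^ 2 * (1 - c) - ξ * c * (1 - b) * (c - b) * a ^ (1 / b) * (c / b * k ^ (c / b - 1))) =
          b * (1 - c) * (ξ * (1 - b) * (c - b) * a ^ (1 / b)) * (b - c) ^ 2 * k ^ (c / b) := by
        rw [hq]
        field_simp
        ring
      rw [hkey]
      have hkp : 0 < k ^ (c / b) := Real.rpow_pos_of_pos hk _
      have h1c : (0:ℝ) < 1 - c := by linarith
      have hbc : (0:ℝ) < (b - c) ^ 2 := pow_pos (by linarith) 2
      exact mul_pos (mul_pos (mul_pos (mul_pos hb0 h1c) hD) hbc) hkp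
    · exact pow_two_pos_of_ne_zero hM
  · have hu : Tendsto (fun k : ℝ => k ^ (c / b - 1)) atTop (nhds 0) := by
      have h := tendsto_rpow_neg_atTop (y := 1 - c / b)
        (by
          have : c / b < 1 := (div_lt_one hb0).mpr hcb
          linarith)
      convert h using 2 with k
      ring_nf
    have hden : b ^ 2 * (1 - c) - ξ * c * (1 - b) * (c - b) * a ^ (1 / b) * 0 ≠ 0 := by
      have h1c : (0:ℝ) < 1 - c := by linarith
      have : (0:ℝ) < b ^ 2 * (1 - c) := by positivity
      simpa using this.ne'
    have hlim : Tendsto (fun k : ℝ =>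
        b * (b * (1 - c) - ξ * (1 - b) * (c - b) * a ^ (1 / b) * k ^ (c / b - 1)) /
          (b ^ 2 * (1 - c) - ξ * c * (1 - b) * (c - b) * a ^ (1 / b) * k ^ (c / b - 1)))
        atTop (nhds (b * (b * (1 - c) - ξ * (1 - b) * (c - b) * a ^ (1 / b) * 0) /
          (b ^ 2 * (1 - c) - ξ * c * (1 - b) * (c - b) * a ^ (1 / b) * 0))) := by
      exact Tendsto.div
        ((tendsto_const_nhds.sub ((hu.const_mul _))).const_mul b)
        (tendsto_const_nhds.sub (hu.const_mul _)) hden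
    have hval : b * (b * (1 - c) - ξ * (1 - b) * (c - b) * a ^ (1 / b) * 0) /
        (b ^ 2 * (1 - c) - ξ * c * (1 - b) * (c - b) * a ^ (1 / b) * 0) = 1 := by
      have h1c : (0:ℝ) < 1 - c := by linarith
      rw [mul_zero, mul_zero, sub_zero, sub_zero]
      rw [div_eq_one_iff_eq (by positivity)]
      ring
    rw [hval] at hlim
    refine hlim.congr' ?_
    filter_upwards [eventually_gt_atTop (0:ℝ)] with k hk
    rw [hσ k]
    have hq : k ^ (c / b) = k ^ (c / b - 1) * k := by
      rw [Real.rpow_sub hk, Real.rpow_one]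
      field_simp
    rw [hq,
      show b * (b * (1 - c) - ξ * (1 - b) * (c - b) * a ^ (1 / b) * k ^ (c / b - 1)) =
        (b * (b * (1 - c) * k - ξ * (1 - b) * (c - b) * a ^ (1 / b) * (k ^ (c / b - 1) * k))) / k
        from by field_simp,
      show b ^ 2 * (1 - c) - ξ * c * (1 - b) * (c - b) * a ^ (1 / b) * k ^ (c / b - 1) =
        (b ^ 2 * (1 - c) * k - ξ * c * (1 - b) * (c - b) * a ^ (1 / b) * (k ^ (c / b - 1) * k)) / k
        from by field_simp,
      div_div_div_cancel_right₀ hk.ne']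
end

section
/- Let a > 0, ξ < 0, 0 < b < 1, and c > 1. Define σ(k) = b·[b(1−c)k − ξ(1−b)(c−b)a^{1/b}k^{c/b}] / [b²(1−c)k − ξc(1−b)(c−b)a^{1/b}k^{c/b}] for k > 0. Then σ'(k) > 0 for all k > 0 (where σ is defined), and σ(k) tends to b/c < 1 as k → ∞. -/
open Real Set Filter

lemma aux_key (b c A : ℝ) (hb0 : 0 < b) (hb1 : b < 1) (hc : 1 < c) (hA : A < 0) :
    (∀ k : ℝ, 0 < k → b ^ 2 * (1 - c) * k - c * A * k ^ (c / b) ≠ 0 →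
      0 < deriv (fun k : ℝ => b * (b * (1 - c) * k - A * k ^ (c / b)) /
        (b ^ 2 * (1 - c) * k - c * A * k ^ (c / b))) k) ∧
    Tendsto (fun k : ℝ => b * (b * (1 - c) * k - A * k ^ (c / b)) /
        (b ^ 2 * (1 - c) * k - c * A * k ^ (c / b))) atTop (nhds (b / c)) := by
  have hr1 : 1 < c / b := (one_lt_div hb0).mpr (by linarith)
  have hAne : A ≠ 0 := ne_of_lt hA
  have hcb : 0 < c - b := by linarith
  constructor
  · intro k hk hD
    have hpow : HasDerivAt (fun x : ℝ => x ^ (c / b)) (c / b * k ^ (c / b - 1)) k :=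
      Real.hasDerivAt_rpow_const (Or.inl (ne_of_gt hk))
    have hN : HasDerivAt (fun x : ℝ => b * (1 - c) * x - A * x ^ (c / b))
        (b * (1 - c) - A * (c / b * k ^ (c / b - 1))) k := by
      have h1 := (hasDerivAt_id k).const_mul (b * (1 - c))
      have h2 := hpow.const_mul A
      simpa using h1.fun_sub h2
    have hDD : HasDerivAt (fun x : ℝ => b ^ 2 * (1 - c) * x - c * A * x ^ (c / b))
        (b ^ 2 * (1 - c) - c * A * (c / b * k ^ (c / b - 1))) k := by
      have h1 := (hasDerivAt_id k).const_mul (b ^ 2 * (1 - c))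
      have h2 := hpow.const_mul (c * A)
      simpa using h1.fun_sub h2
    have hF := (hN.const_mul b).fun_div hDD hD
    rw [hF.deriv]
    have hu : k ^ (c / b - 1) * k = k ^ (c / b) := by
      rw [← Real.rpow_add_one (ne_of_gt hk) (c / b - 1)]
      congr 1
      ring
    have key : b * (b * (1 - c) - A * (c / b * k ^ (c / b - 1))) *
          (b ^ 2 * (1 - c) * k - c * A * k ^ (c / b)) -
        b * (b * (1 - c) * k - A * k ^ (c / b)) *
          (b ^ 2 * (1 - c) - c * A * (c / b * k ^ (c / b - 1))) =
        b * (b * (1 - c)) * A * (c - b) * (c / b - 1) * k ^ (c / b) := by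
      linear_combination (b * (b * (1 - c)) * A * (c - b) * (c / b)) * hu
    apply div_pos
    · rw [key]
      have hpA : 0 < b * (1 - c) * A := mul_pos_of_neg_of_neg (by nlinarith) hA
      calc (0:ℝ) < b * (b * (1 - c) * A) * ((c - b) * ((c / b - 1) * k ^ (c / b))) :=
            mul_pos (mul_pos hb0 hpA)
              (mul_pos hcb (mul_pos (by linarith) (Real.rpow_pos_of_pos hk _)))
        _ = b * (b * (1 - c)) * A * (c - b) * (c / b - 1) * k ^ (c / b) := by ring
    · exact pow_two_pos_of_ne_zero hD
  · have h1 : Tendsto (fun k : ℝ => k ^ (1 - c / b)) atTop (nhds 0) := by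
      have := tendsto_rpow_neg_atTop (y := c / b - 1) (by linarith)
      simpa [show -(c / b - 1) = 1 - c / b by ring] using this
    have hden0 : b ^ 2 * (1 - c) * (0:ℝ) - c * A ≠ 0 := by
      simp only [mul_zero, zero_sub, neg_ne_zero]
      exact mul_ne_zero (by positivity) hAne
    have hcont : Tendsto (fun u : ℝ => b * (b * (1 - c) * u - A) / (b ^ 2 * (1 - c) * u - c * A))
        (nhds 0) (nhds (b / c)) := by
      have hc2 : ContinuousAt (fun u : ℝ => b * (b * (1 - c) * u - A) /
          (b ^ 2 * (1 - c) * u - c * A)) 0 := by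
        apply ContinuousAt.div
        · fun_prop
        · fun_prop
        · simpa using hden0
      have hval : b * (b * (1 - c) * (0:ℝ) - A) / (b ^ 2 * (1 - c) * (0:ℝ) - c * A) = b / c := by
        rw [mul_zero, mul_zero, zero_sub, zero_sub]
        rw [div_eq_div_iff (by simpa using hden0) (by positivity)]
        ring
      have ht := hc2.tendsto
      rwa [hval] at ht
    have heq : ∀ᶠ k : ℝ in atTop, (fun u : ℝ => b * (b * (1 - c) * u - A) /
          (b ^ 2 * (1 - c) * u - c * A)) (k ^ (1 - c / b)) =
        b * (b * (1 - c) * k - A * k ^ (c / b)) / (b ^ 2 * (1 - c) * k - c * A * k ^ (c / b)) := by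
      filter_upwards [eventually_gt_atTop (0:ℝ)] with k hk
      have ht : (0:ℝ) < k ^ (c / b) := Real.rpow_pos_of_pos hk _
      have hst : k ^ (1 - c / b) * k ^ (c / b) = k := by
        rw [← Real.rpow_add hk, show 1 - c / b + c / b = 1 by ring, Real.rpow_one]
      rw [← mul_div_mul_right _ _ (ne_of_gt ht)]
      congr 1
      · linear_combination (b * (b * (1 - c))) * hst
      · linear_combination (b ^ 2 * (1 - c)) * hst
    exact Tendsto.congr' heq (hcont.comp h1)

/-- Case `0 < b < 1 < c`, `ξ < 0`: the elasticity of substitution `σ` is increasing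
(`σ' > 0` wherever defined on `k > 0`) and `σ(k) → b/c < 1` as `k → ∞`. -/
theorem stmt_11 (a b c ξ : ℝ) (ha : 0 < a) (hξ : ξ < 0)
    (hb0 : 0 < b) (hb1 : b < 1) (hc : 1 < c)
    (σ : ℝ → ℝ)
    (hσ : ∀ k : ℝ, σ k =
      b * (b * (1 - c) * k - ξ * (1 - b) * (c - b) * a ^ (1 / b) * k ^ (c / b)) /
        (b ^ 2 * (1 - c) * k - ξ * c * (1 - b) * (c - b) * a ^ (1 / b) * k ^ (c / b))) :
    (∀ k : ℝ, 0 < k →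
      b ^ 2 * (1 - c) * k - ξ * c * (1 - b) * (c - b) * a ^ (1 / b) * k ^ (c / b) ≠ 0 →
      0 < deriv σ k) ∧
    Tendsto σ atTop (nhds (b / c)) ∧ b / c < 1 := by
  set A : ℝ := ξ * (1 - b) * (c - b) * a ^ (1 / b) with hAdef
  have hA : A < 0 := by
    rw [hAdef]
    have h1 : ξ * (1 - b) < 0 := mul_neg_of_neg_of_pos hξ (by linarith)
    have h2 : ξ * (1 - b) * (c - b) < 0 := mul_neg_of_neg_of_pos h1 (by linarith)
    exact mul_neg_of_neg_of_pos h2 (Real.rpow_pos_of_pos ha _)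
  have hfun : σ = fun k : ℝ => b * (b * (1 - c) * k - A * k ^ (c / b)) /
      (b ^ 2 * (1 - c) * k - c * A * k ^ (c / b)) := by
    funext k
    rw [hσ k]
    congr 1
    rw [hAdef]; ring
  obtain ⟨h1, h2⟩ := aux_key b c A hb0 hb1 hc hA
  refine ⟨fun k hk hD => ?_, ?_, ?_⟩
  · have hD' : b ^ 2 * (1 - c) * k - c * A * k ^ (c / b) ≠ 0 := by
      have he : b ^ 2 * (1 - c) * k - c * A * k ^ (c / b) =
          b ^ 2 * (1 - c) * k - ξ * c * (1 - b) * (c - b) * a ^ (1 / b) * k ^ (c / b) := by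
        rw [hAdef]; ring
      rw [he]; exact hD
    rw [hfun]
    exact h1 k hk hD'
  · rw [hfun]; exact h2
  · rw [div_lt_one (by linarith)]; linarith
end

section
/- Let λ, μ be real constants with 1 + λ + μ ≠ 0, and let I ⊆ (0, ∞) be an open interval. Suppose y : I → ℝ is differentiable with y(k) > 0 and y'(k) > 0, and its marginal rate of substitution satisfies R(k) = (λ + μ)·k for all k ∈ I (the case θ = 1). Then there exists a constant A > 0 such that y(k) = A·k^{1/(1+λ+μ)} for all k ∈ I; that is, y is a Cobb–Douglas production function. -/
/-!
With `b = 1 + λ + μ`, the condition `R(k) = (λ + μ) k` says `y / y' = b k`, i.e. `y` solves the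
Euler equation `k y' = y / b`. Then `y(k) k^(-1/b)` has vanishing derivative, so it is constant on
the interval.
-/

open Real Set

theorem eq_one_div_mul_div_of_div_sub_eq {y y' k b : ℝ} (hy : y ≠ 0) (hy' : y' ≠ 0)
    (hR : y / y' - k = (b - 1) * k) : y' = 1 / b * y / k := by
  have hbk : y / y' = b * k := by linarith
  have hbk_ne : b * k ≠ 0 := hbk ▸ div_ne_zero hy hy'
  rw [div_eq_iff hy'] at hbk
  field_simp [left_ne_zero_of_mul hbk_ne, right_ne_zero_of_mul hbk_ne]
  linarith

theorem hasDerivAt_mul_rpow_neg_eq_zero {f : ℝ → ℝ} {c x : ℝ} (hx : 0 < x)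
    (hf : HasDerivAt f (c * f x / x) x) : HasDerivAt (fun t => f t * t ^ (-c)) 0 x := by
  have hpow : HasDerivAt (fun t : ℝ => t ^ (-c)) (-c * x ^ (-c - 1)) x :=
    hasDerivAt_rpow_const (Or.inl hx.ne')
  refine (hf.mul hpow).congr_deriv ?_
  rw [rpow_sub_one hx.ne']
  field_simp
  ring

theorem IsOpen.eqOn_mul_rpow_of_hasDerivAt {s : Set ℝ} (hs : IsOpen s) (hs' : IsPreconnected s)
    (hpos : s ⊆ Ioi 0) {f : ℝ → ℝ} {c : ℝ} (hf : ∀ x ∈ s, HasDerivAt f (c * f x / x) x)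
    {x₀ : ℝ} (hx₀ : x₀ ∈ s) : s.EqOn f (fun x => f x₀ * x₀ ^ (-c) * x ^ c) := by
  intro x hx
  have hg : ∀ x ∈ s, HasDerivAt (fun t => f t * t ^ (-c)) 0 x := fun x hx =>
    hasDerivAt_mul_rpow_neg_eq_zero (hpos hx) (hf x hx)
  have hconst : f x * x ^ (-c) = f x₀ * x₀ ^ (-c) :=
    hs.is_const_of_deriv_eq_zero hs' (fun x hx => (hg x hx).differentiableAt.differentiableWithinAt)
      (fun x hx => (hg x hx).deriv) hx hx₀
  simp only
  rw [← hconst, mul_assoc, ← rpow_add (hpos hx), neg_add_cancel, rpow_zero, mul_one]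

theorem stmt_13_general (lam mu : ℝ)
    (p q : ℝ) (hpq : 0 ≤ p) (y : ℝ → ℝ)
    (hdiff : ∀ k ∈ Ioo p q, DifferentiableAt ℝ y k)
    (hypos : ∀ k ∈ Ioo p q, 0 < y k)
    (hy' : ∀ k ∈ Ioo p q, 0 < deriv y k)
    (hR : ∀ k ∈ Ioo p q, y k / deriv y k - k = (lam + mu) * k) :
    ∃ A : ℝ, 0 < A ∧ ∀ k ∈ Ioo p q, y k = A * k ^ (1 / (1 + lam + mu)) := by
  rcases (Ioo p q).eq_empty_or_nonempty with hempty | ⟨k₀, hk₀⟩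
  · exact ⟨1, one_pos, by simp [hempty]⟩
  have hpos : Ioo p q ⊆ Ioi 0 := fun k hk => hpq.trans_lt hk.1
  have hderiv : ∀ k ∈ Ioo p q, HasDerivAt y (1 / (1 + lam + mu) * y k / k) k := by
    intro k hk
    have hR' : y k / deriv y k - k = (1 + lam + mu - 1) * k := by rw [hR k hk]; ring
    rw [← eq_one_div_mul_div_of_div_sub_eq (hypos k hk).ne' (hy' k hk).ne' hR']
    exact (hdiff k hk).hasDerivAt
  have hA : 0 < y k₀ * k₀ ^ (-(1 / (1 + lam + mu))) :=
    mul_pos (hypos k₀ hk₀) (rpow_pos_of_pos (hpos hk₀) _)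
  exact ⟨_, hA, isOpen_Ioo.eqOn_mul_rpow_of_hasDerivAt isPreconnected_Ioo hpos hderiv hk₀⟩

/-- If the marginal rate of substitution is linear, `R(k) = (λ+μ)k` (the case `θ = 1`),
with `1 + λ + μ ≠ 0`, then `y(k) = A·k^{1/(1+λ+μ)}` for some `A > 0`: a Cobb–Douglas
production function. -/
theorem stmt_13 (lam mu : ℝ) (h : 1 + lam + mu ≠ 0)
    (p q : ℝ) (hpq : 0 ≤ p) (y : ℝ → ℝ)
    (hdiff : ∀ k ∈ Ioo p q, DifferentiableAt ℝ y k)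
    (hypos : ∀ k ∈ Ioo p q, 0 < y k)
    (hy' : ∀ k ∈ Ioo p q, 0 < deriv y k)
    (hR : ∀ k ∈ Ioo p q, y k / deriv y k - k = (lam + mu) * k) :
    ∃ A : ℝ, 0 < A ∧ ∀ k ∈ Ioo p q, y k = A * k ^ (1 / (1 + lam + mu)) :=
  stmt_13_general lam mu p q hpq y hdiff hypos hy' hR
end

section
/- Let a > 0, b, c, ξ be real constants with b ≠ 0, b ≠ 1, b + c ≠ 1. Define y(k) = a^{1/(1−b)}·[(ξ(b−1)/b)·k^{(b−1)/b} + ((b−1)/(b+c−1))·k^{−c/b}]^{b/(b−1)} on an open interval I ⊆ (0, ∞) where the bracketed expression is positive and y'(k) > 0. Then the marginal rate of substitution satisfies R(k) = y(k)/y'(k) − k = −b(b+c−1)·k / [ξ(1−b)(b+c−1)·k^{(b+c−1)/b} + bc] for all k ∈ I where the denominator is nonzero. -/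
open Real Set

set_option maxHeartbeats 1000000 in
/-- For the Liu–Hildebrand production function
`y(k) = a^{1/(1-b)}[(ξ(b-1)/b)k^{(b-1)/b} + ((b-1)/(b+c-1))k^{-c/b}]^{b/(b-1)}`,
the marginal rate of substitution is
`R(k) = -b(b+c-1)k/[ξ(1-b)(b+c-1)k^{(b+c-1)/b} + bc]` where the denominator is nonzero. -/
theorem stmt_15 (a b c ξ : ℝ) (ha : 0 < a) (hb0 : b ≠ 0) (hb1 : b ≠ 1) (hbc : b + c ≠ 1)
    (p q : ℝ) (hpq : 0 ≤ p) (y : ℝ → ℝ)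
    (hy : ∀ k : ℝ, y k = a ^ (1 / (1 - b)) *
      (ξ * (b - 1) / b * k ^ ((b - 1) / b)
        + (b - 1) / (b + c - 1) * k ^ (-c / b)) ^ (b / (b - 1)))
    (hbr : ∀ k ∈ Ioo p q,
      0 < ξ * (b - 1) / b * k ^ ((b - 1) / b) + (b - 1) / (b + c - 1) * k ^ (-c / b))
    (hy' : ∀ k ∈ Ioo p q, 0 < deriv y k) :
    ∀ k ∈ Ioo p q,
      ξ * (1 - b) * (b + c - 1) * k ^ ((b + c - 1) / b) + b * c ≠ 0 →
      y k / deriv y k - k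
        = -b * (b + c - 1) * k /
            (ξ * (1 - b) * (b + c - 1) * k ^ ((b + c - 1) / b) + b * c) := by
  intro k hk hden
  have hk0 : 0 < k := lt_of_le_of_lt hpq hk.1
  have hkne : k ≠ 0 := hk0.ne'
  have hb1' : b - 1 ≠ 0 := sub_ne_zero.mpr hb1
  have hbc' : b + c - 1 ≠ 0 := fun h => hbc (by linarith)
  set α := (b - 1) / b with hα
  set β := -c / b with hβ
  have hg : 0 < ξ * (b - 1) / b * k ^ α + (b - 1) / (b + c - 1) * k ^ β := hbr k hk
  set G := ξ * (b - 1) / b * k ^ α + (b - 1) / (b + c - 1) * k ^ β with hG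
  set G' := ξ * (b - 1) / b * (α * k ^ (α - 1)) + (b - 1) / (b + c - 1) * (β * k ^ (β - 1)) with hG'
  have hyfun : y = fun x : ℝ => a ^ (1 / (1 - b)) *
      (ξ * (b - 1) / b * x ^ α + (b - 1) / (b + c - 1) * x ^ β) ^ (b / (b - 1)) := funext hy
  have hdg : HasDerivAt (fun x : ℝ => ξ * (b - 1) / b * x ^ α + (b - 1) / (b + c - 1) * x ^ β) G' k :=
    ((Real.hasDerivAt_rpow_const (Or.inl hkne)).const_mul _).add
      ((Real.hasDerivAt_rpow_const (Or.inl hkne)).const_mul _)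
  have hY : HasDerivAt y (a ^ (1 / (1 - b)) * (G' * (b / (b - 1)) * G ^ (b / (b - 1) - 1))) k := by
    rw [hyfun]
    exact (hdg.rpow_const (Or.inl hg.ne')).const_mul _
  have hderiv : deriv y k = a ^ (1 / (1 - b)) * (G' * (b / (b - 1)) * G ^ (b / (b - 1) - 1)) :=
    hY.deriv
  have hCpos : 0 < a ^ (1 / (1 - b)) * G ^ (b / (b - 1) - 1) :=
    mul_pos (Real.rpow_pos_of_pos ha _) (Real.rpow_pos_of_pos hg _)
  set E := G' * (b / (b - 1)) with hE
  have hEne : E ≠ 0 := by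
    have h0 := hy' k hk
    rw [hderiv] at h0
    intro h
    rw [h] at h0
    simp at h0
  have hratio : y k / deriv y k = G / E := by
    rw [hy k, hderiv, ← hG]
    have hGe : G ^ (b / (b - 1)) = G ^ (b / (b - 1) - 1) * G := by
      rw [← Real.rpow_add_one hg.ne']
      congr 1
      ring
    rw [hGe,
      show a ^ (1 / (1 - b)) * (G ^ (b / (b - 1) - 1) * G)
        = a ^ (1 / (1 - b)) * G ^ (b / (b - 1) - 1) * G by ring,
      show a ^ (1 / (1 - b)) * (E * G ^ (b / (b - 1) - 1))
        = a ^ (1 / (1 - b)) * G ^ (b / (b - 1) - 1) * E by ring,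
      mul_div_mul_left _ _ hCpos.ne']
  have hK1 : k ^ α = k ^ ((b + c - 1) / b) * k ^ β := by
    rw [← Real.rpow_add hk0]
    congr 1
    rw [hα, hβ]
    field_simp
    ring
  have hαk : k ^ (α - 1) = k ^ α / k := by rw [Real.rpow_sub hk0, Real.rpow_one]
  have hβk : k ^ (β - 1) = k ^ β / k := by rw [Real.rpow_sub hk0, Real.rpow_one]
  have hK2ne : k ^ β ≠ 0 := (Real.rpow_pos_of_pos hk0 _).ne'
  set K2 := k ^ β with hK2
  set K3 := k ^ ((b + c - 1) / b) with hK3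
  have h1 : G - k * E = K2 := by
    rw [hE, hG', hG, hαk, hβk, hK1, hα, hβ]
    field_simp
    ring
  have h2 : E * (b * (b + c - 1) * k) = -(K2 * (ξ * (1 - b) * (b + c - 1) * K3 + b * c)) := by
    rw [hE, hG', hαk, hβk, hK1, hα, hβ]
    field_simp
    ring
  rw [hratio, div_sub' hEne, div_eq_div_iff hEne hden,
    show G - E * k = G - k * E by ring, h1]
  linear_combination h2
end

section
/- Let a > 0, b, c, ξ be real constants with b ≠ 0, b ≠ 1, b + c ≠ 1. Define y(k) = a^{1/(1−b)}·[(ξ(b−1)/b)·k^{(b−1)/b} + ((b−1)/(b+c−1))·k^{−c/b}]^{b/(b−1)} on an open interval I ⊆ (0, ∞) where the bracketed expression is positive, y'(k) > 0 and y''(k) ≠ 0. Then the elasticity of factor substitution satisfies σ(k) = b·[ξ(1−b)(b+c−1)·k^{(b+c−1)/b} + bc] / [ξ(1−b)(b+c−1)(1−c)·k^{(b+c−1)/b} + b²c] for all k ∈ I where the denominator is nonzero. -/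
open Real Set

set_option maxHeartbeats 2000000 in
/-- For the Liu–Hildebrand production function
`y(k) = a^{1/(1-b)}[(ξ(b-1)/b)k^{(b-1)/b} + ((b-1)/(b+c-1))k^{-c/b}]^{b/(b-1)}`,
the elasticity of factor substitution is
`σ(k) = b[ξ(1-b)(b+c-1)k^{(b+c-1)/b} + bc]/[ξ(1-b)(b+c-1)(1-c)k^{(b+c-1)/b} + b²c]`
where the denominator is nonzero. -/
theorem stmt_16 (a b c ξ : ℝ) (ha : 0 < a) (hb0 : b ≠ 0) (hb1 : b ≠ 1) (hbc : b + c ≠ 1)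
    (p q : ℝ) (hpq : 0 ≤ p) (y : ℝ → ℝ)
    (hy : ∀ k : ℝ, y k = a ^ (1 / (1 - b)) *
      (ξ * (b - 1) / b * k ^ ((b - 1) / b)
        + (b - 1) / (b + c - 1) * k ^ (-c / b)) ^ (b / (b - 1)))
    (hbr : ∀ k ∈ Ioo p q,
      0 < ξ * (b - 1) / b * k ^ ((b - 1) / b) + (b - 1) / (b + c - 1) * k ^ (-c / b))
    (hy' : ∀ k ∈ Ioo p q, 0 < deriv y k)
    (hy'' : ∀ k ∈ Ioo p q, deriv (deriv y) k ≠ 0) :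
    ∀ k ∈ Ioo p q,
      ξ * (1 - b) * (b + c - 1) * (1 - c) * k ^ ((b + c - 1) / b) + b ^ 2 * c ≠ 0 →
      deriv y k * (k * deriv y k - y k) / (k * y k * deriv (deriv y) k)
        = b * (ξ * (1 - b) * (b + c - 1) * k ^ ((b + c - 1) / b) + b * c) /
            (ξ * (1 - b) * (b + c - 1) * (1 - c) * k ^ ((b + c - 1) / b) + b ^ 2 * c) := by
  intro k hk hden
  have hkpos : 0 < k := lt_of_le_of_lt hpq hk.1
  have hkne : k ≠ 0 := ne_of_gt hkpos
  have hb1' : b - 1 ≠ 0 := sub_ne_zero.mpr hb1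
  have hbc' : b + c - 1 ≠ 0 := by intro h; exact hbc (by linarith)
  set A : ℝ := a ^ (1 / (1 - b)) with hA
  have hApos : 0 < A := Real.rpow_pos_of_pos ha _
  set e1 : ℝ := (b - 1) / b with he1
  set e2 : ℝ := -c / b with he2
  set E : ℝ := b / (b - 1) with hE
  set g : ℝ → ℝ :=
    fun x => ξ * (b - 1) / b * x ^ e1 + (b - 1) / (b + c - 1) * x ^ e2 with hg
  set Gd : ℝ → ℝ :=
    fun x => ξ * (b - 1) / b * (e1 * x ^ (e1 - 1))
      + (b - 1) / (b + c - 1) * (e2 * x ^ (e2 - 1)) with hGd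
  have hyf : y = fun x => A * g x ^ E := by
    funext x
    rw [hy x]
  have hgd : ∀ x : ℝ, x ≠ 0 → HasDerivAt g (Gd x) x := by
    intro x hx
    simp only [hg, hGd]
    exact ((hasDerivAt_rpow_const (Or.inl hx)).const_mul (ξ * (b - 1) / b)).add
      ((hasDerivAt_rpow_const (Or.inl hx)).const_mul ((b - 1) / (b + c - 1)))
  have hgpos : 0 < g k := by simp only [hg]; exact hbr k hk
  have hgne : g k ≠ 0 := ne_of_gt hgpos
  have hyd : ∀ x ∈ Ioo p q, HasDerivAt y (A * E * (Gd x * g x ^ (E - 1))) x := by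
    intro x hx
    have hx0 : x ≠ 0 := ne_of_gt (lt_of_le_of_lt hpq hx.1)
    have hgx : g x ≠ 0 := ne_of_gt (by simp only [hg]; exact hbr x hx)
    have h := ((hgd x hx0).rpow_const (p := E) (Or.inl hgx)).const_mul A
    rw [hyf]
    rw [show A * E * (Gd x * g x ^ (E - 1)) = A * (Gd x * E * g x ^ (E - 1)) by ring]
    exact h
  have heq : deriv y =ᶠ[nhds k] fun x => A * E * (Gd x * g x ^ (E - 1)) := by
    filter_upwards [Ioo_mem_nhds hk.1 hk.2] with x hx using (hyd x hx).deriv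
  have hGdd : HasDerivAt Gd
      (ξ * (b - 1) / b * (e1 * ((e1 - 1) * k ^ (e1 - 1 - 1)))
        + (b - 1) / (b + c - 1) * (e2 * ((e2 - 1) * k ^ (e2 - 1 - 1)))) k := by
    simp only [hGd]
    exact (((hasDerivAt_rpow_const (Or.inl hkne)).const_mul e1).const_mul
        (ξ * (b - 1) / b)).add
      (((hasDerivAt_rpow_const (Or.inl hkne)).const_mul e2).const_mul
        ((b - 1) / (b + c - 1)))
  have h2a : HasDerivAt (fun x => g x ^ (E - 1))
      (Gd k * (E - 1) * g k ^ (E - 1 - 1)) k :=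
    (hgd k hkne).rpow_const (Or.inl hgne)
  have hFd : HasDerivAt (fun x => A * E * (Gd x * g x ^ (E - 1)))
      (A * E * ((ξ * (b - 1) / b * (e1 * ((e1 - 1) * k ^ (e1 - 1 - 1)))
          + (b - 1) / (b + c - 1) * (e2 * ((e2 - 1) * k ^ (e2 - 1 - 1))))
          * g k ^ (E - 1)
        + Gd k * (Gd k * (E - 1) * g k ^ (E - 1 - 1)))) k :=
    (hGdd.mul h2a).const_mul (A * E)
  have hd2 : deriv (deriv y) k
      = A * E * ((ξ * (b - 1) / b * (e1 * ((e1 - 1) * k ^ (e1 - 1 - 1)))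
          + (b - 1) / (b + c - 1) * (e2 * ((e2 - 1) * k ^ (e2 - 1 - 1))))
          * g k ^ (E - 1)
        + Gd k * (Gd k * (E - 1) * g k ^ (E - 1 - 1))) :=
    heq.deriv_eq.trans hFd.deriv
  have hd1 : deriv y k = A * E * (Gd k * g k ^ (E - 1)) := (hyd k hk).deriv
  have hyk : y k = A * g k ^ E := by rw [hyf]
  have hypos : 0 < y k := by
    rw [hyk]; exact mul_pos hApos (Real.rpow_pos_of_pos hgpos E)
  have hD1 : k * y k * deriv (deriv y) k ≠ 0 :=
    mul_ne_zero (mul_ne_zero hkne (ne_of_gt hypos)) (hy'' k hk)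
  rw [div_eq_div_iff hD1 hden, hd1, hd2, hyk]
  have hGE1 : g k ^ (E - 1) = g k ^ (E - 1 - 1) * g k := by
    rw [← Real.rpow_add_one hgne, show E - 1 - 1 + 1 = E - 1 by ring]
  have hGE : g k ^ E = g k ^ (E - 1 - 1) * g k * g k := by
    rw [← Real.rpow_add_one hgne, ← Real.rpow_add_one hgne,
      show E - 1 - 1 + 1 + 1 = E by ring]
  rw [hGE1, hGE]
  have hke1' : k ^ (e1 - 1) = k ^ (e1 - 1 - 1) * k := by
    rw [← Real.rpow_add_one hkne, show e1 - 1 - 1 + 1 = e1 - 1 by ring]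
  have hke1 : k ^ e1 = k ^ (e1 - 1 - 1) * k * k := by
    rw [← Real.rpow_add_one hkne, ← Real.rpow_add_one hkne,
      show e1 - 1 - 1 + 1 + 1 = e1 by ring]
  have hke2' : k ^ (e2 - 1) = k ^ (e2 - 1 - 1) * k := by
    rw [← Real.rpow_add_one hkne, show e2 - 1 - 1 + 1 = e2 - 1 by ring]
  have hke2 : k ^ e2 = k ^ (e2 - 1 - 1) * k * k := by
    rw [← Real.rpow_add_one hkne, ← Real.rpow_add_one hkne,
      show e2 - 1 - 1 + 1 + 1 = e2 by ring]
  have hW : k ^ (e1 - 1 - 1) = k ^ ((b + c - 1) / b) * k ^ (e2 - 1 - 1) := by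
    rw [← Real.rpow_add hkpos]
    congr 1
    simp only [he1, he2]
    field_simp
    ring
  set W := k ^ ((b + c - 1) / b) with hWdef
  set s := k ^ (e2 - 1 - 1) with hsdef
  set G2 := g k ^ (E - 1 - 1) with hG2def
  obtain ⟨t, hs'⟩ : ∃ t, s = t * (b ^ 3 * (b + c - 1) * (b - 1)) :=
    ⟨s / (b ^ 3 * (b + c - 1) * (b - 1)), by field_simp⟩
  have hgkv : g k = t * k ^ 2 * (ξ * (b - 1) * (b + c - 1) * W + (b - 1) * b)
      * (b ^ 2 * (b - 1)) := by
    simp only [hg]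
    rw [hke1, hke2, hW, hs']
    field_simp
  have hGdkv : Gd k = t * k * (ξ * (b - 1) ^ 2 * (b + c - 1) * W - b * c * (b - 1))
      * (b * (b - 1)) := by
    simp only [hGd]
    rw [hke1', hke2', hW, hs']
    simp only [he1, he2]
    field_simp
    ring
  have hE1 : E - 1 = 1 / (b - 1) := by rw [hE]; field_simp; ring
  have hGddv : ξ * (b - 1) / b * (e1 * ((e1 - 1) * k ^ (e1 - 1 - 1)))
        + (b - 1) / (b + c - 1) * (e2 * ((e2 - 1) * s))
      = t * (-ξ * (b - 1) ^ 2 * (b + c - 1) * W + b * c * (b + c) * (b - 1)) * (b - 1) := by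
    rw [hW, hs']
    simp only [he1, he2]
    field_simp
    ring
  rw [hgkv, hGdkv, hGddv, hE1, hE]
  obtain ⟨V, hV⟩ : ∃ v, v = ξ * (b + c - 1) * W := ⟨_, rfl⟩
  have r2 : ξ * (b - 1) ^ 2 * (b + c - 1) * W = (b - 1) ^ 2 * V := by rw [hV]; ring
  have r3 : -ξ * (b - 1) ^ 2 * (b + c - 1) * W = -((b - 1) ^ 2 * V) := by rw [hV]; ring
  have r4 : ξ * (1 - b) * (b + c - 1) * (1 - c) * W = -(b - 1) * (1 - c) * V := by
    rw [hV]; ring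
  have r5 : ξ * (1 - b) * (b + c - 1) * W = -(b - 1) * V := by rw [hV]; ring
  have r1 : ξ * (b - 1) * (b + c - 1) * W = (b - 1) * V := by rw [hV]; ring
  rw [r2, r3, r4, r5, r1]
  field_simp
  ring
end

section
/- Let b, c ∈ (0, 1) and ξ < 0. Define σ(k) = b·[ξ(1−b)(b+c−1)·k^{(b+c−1)/b} + bc] / [ξ(1−b)(b+c−1)(1−c)·k^{(b+c−1)/b} + b²c] for k > 0 (where the denominator is nonzero). If b + c > 1, then σ is decreasing and σ(k) tends to b/(1−c) as k → ∞; if b + c < 1, then σ is increasing and σ(k) tends to 1 as k → ∞. -/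
open Real Set Filter

lemma aux_deriv_18 (b c ξ : ℝ) (σ : ℝ → ℝ)
    (hσ : ∀ k : ℝ, σ k =
      b * (ξ * (1 - b) * (b + c - 1) * k ^ ((b + c - 1) / b) + b * c) /
        (ξ * (1 - b) * (b + c - 1) * (1 - c) * k ^ ((b + c - 1) / b) + b ^ 2 * c))
    (k : ℝ) (hk : 0 < k)
    (hD : ξ * (1 - b) * (b + c - 1) * (1 - c) * k ^ ((b + c - 1) / b) + b ^ 2 * c ≠ 0) :
    deriv σ k =
      ξ * (1 - b) * (b + c - 1) * ((b + c - 1) / b) * (b ^ 2 * c) * (b + c - 1) *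
          k ^ ((b + c - 1) / b - 1) /
        (ξ * (1 - b) * (b + c - 1) * (1 - c) * k ^ ((b + c - 1) / b) + b ^ 2 * c) ^ 2 := by
  set p := (b + c - 1) / b with hp
  set A := ξ * (1 - b) * (b + c - 1) with hA
  have hrp : HasDerivAt (fun x : ℝ => x ^ p) (p * k ^ (p - 1)) k :=
    Real.hasDerivAt_rpow_const (Or.inl hk.ne')
  have hN : HasDerivAt (fun x : ℝ => b * (A * x ^ p + b * c)) (b * (A * (p * k ^ (p - 1)))) k :=
    ((hrp.const_mul A).add_const (b * c)).const_mul b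
  have hDen : HasDerivAt (fun x : ℝ => A * (1 - c) * x ^ p + b ^ 2 * c)
      (A * (1 - c) * (p * k ^ (p - 1))) k :=
    (hrp.const_mul (A * (1 - c))).add_const (b ^ 2 * c)
  have hσ' : σ = fun x : ℝ => b * (A * x ^ p + b * c) / (A * (1 - c) * x ^ p + b ^ 2 * c) :=
    funext fun x => hσ x
  rw [hσ', show (fun x : ℝ => b * (A * x ^ p + b * c) / (A * (1 - c) * x ^ p + b ^ 2 * c)) = ((fun x : ℝ => b * (A * x ^ p + b * c)) / fun x : ℝ => A * (1 - c) * x ^ p + b ^ 2 * c) from rfl, ((hN.div hDen hD).deriv)]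
  ring

/-- For `b, c ∈ (0,1)` and `ξ < 0`, the Liu–Hildebrand elasticity of substitution
`σ(k) = b[ξ(1-b)(b+c-1)k^{(b+c-1)/b} + bc]/[ξ(1-b)(b+c-1)(1-c)k^{(b+c-1)/b} + b²c]`
is decreasing with limit `b/(1-c)` at `∞` when `b + c > 1`, and increasing with limit `1`
at `∞` when `b + c < 1`. -/
theorem stmt_18 (b c ξ : ℝ) (hb : b ∈ Ioo (0 : ℝ) 1) (hc : c ∈ Ioo (0 : ℝ) 1) (hξ : ξ < 0)
    (σ : ℝ → ℝ)
    (hσ : ∀ k : ℝ, σ k =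
      b * (ξ * (1 - b) * (b + c - 1) * k ^ ((b + c - 1) / b) + b * c) /
        (ξ * (1 - b) * (b + c - 1) * (1 - c) * k ^ ((b + c - 1) / b) + b ^ 2 * c)) :
    (1 < b + c →
      (∀ k : ℝ, 0 < k →
        ξ * (1 - b) * (b + c - 1) * (1 - c) * k ^ ((b + c - 1) / b) + b ^ 2 * c ≠ 0 →
        deriv σ k < 0) ∧
      Tendsto σ atTop (nhds (b / (1 - c)))) ∧
    (b + c < 1 →
      (∀ k : ℝ, 0 < k →
        ξ * (1 - b) * (b + c - 1) * (1 - c) * k ^ ((b + c - 1) / b) + b ^ 2 * c ≠ 0 →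
        0 < deriv σ k) ∧
      Tendsto σ atTop (nhds 1)) := by
  obtain ⟨hb0, hb1⟩ := hb
  obtain ⟨hc0, hc1⟩ := hc
  constructor
  · intro h1
    have hA : ξ * (1 - b) * (b + c - 1) < 0 :=
      mul_neg_of_neg_of_pos (mul_neg_of_neg_of_pos hξ (by linarith)) (by linarith)
    constructor
    · intro k hk hD
      rw [aux_deriv_18 b c ξ σ hσ k hk hD]
      apply div_neg_of_neg_of_pos
      · have e1 : 0 < (b + c - 1) / b := div_pos (by linarith) hb0
        have e2 : 0 < b ^ 2 * c := by positivity
        have e3 : 0 < b + c - 1 := by linarith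
        have e4 : 0 < k ^ ((b + c - 1) / b - 1) := Real.rpow_pos_of_pos hk _
        nlinarith [mul_neg_of_neg_of_pos hA
          (mul_pos (mul_pos (mul_pos e1 e2) e3) e4)]
      · exact pow_two_pos_of_ne_zero hD
    · set p := (b + c - 1) / b with hp
      set A := ξ * (1 - b) * (b + c - 1) with hAdef
      have hp0 : 0 < p := div_pos (by linarith) hb0
      have hu : Tendsto (fun k : ℝ => k ^ (-p)) atTop (nhds 0) := tendsto_rpow_neg_atTop hp0
      have hAne : A ≠ 0 := ne_of_lt (mul_neg_of_neg_of_pos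
        (mul_neg_of_neg_of_pos hξ (by linarith)) (by linarith))
      have hden : A * (1 - c) ≠ 0 := mul_ne_zero hAne (by linarith)
      have htend : Tendsto
          (fun k : ℝ => b * (A + b * c * k ^ (-p)) / (A * (1 - c) + b ^ 2 * c * k ^ (-p)))
          atTop (nhds (b * (A + b * c * 0) / (A * (1 - c) + b ^ 2 * c * 0))) :=
        Tendsto.div (((hu.const_mul (b * c)).const_add A).const_mul b)
          ((hu.const_mul (b ^ 2 * c)).const_add (A * (1 - c))) (by simpa using hden)
      have hval : b * (A + b * c * 0) / (A * (1 - c) + b ^ 2 * c * 0) = b / (1 - c) := by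
        have hc' : (1 : ℝ) - c ≠ 0 := by linarith
        field_simp
        ring
      rw [hval] at htend
      refine htend.congr' ?_
      filter_upwards [eventually_gt_atTop (0 : ℝ)] with k hk
      rw [hσ k]
      have ht : (0 : ℝ) < k ^ p := Real.rpow_pos_of_pos hk _
      have hneg : k ^ (-p) = (k ^ p)⁻¹ := Real.rpow_neg hk.le p
      rw [hneg]
      have e1 : b * (A + b * c * (k ^ p)⁻¹) = b * (A * k ^ p + b * c) / k ^ p := by
        field_simp
      have e2 : A * (1 - c) + b ^ 2 * c * (k ^ p)⁻¹
          = (A * (1 - c) * k ^ p + b ^ 2 * c) / k ^ p := by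
        field_simp
      rw [e1, e2, div_div_div_comm, div_self ht.ne', div_one]
  · intro h1
    have hA : 0 < ξ * (1 - b) * (b + c - 1) := by
      have : ξ * (1 - b) < 0 := mul_neg_of_neg_of_pos hξ (by linarith)
      exact mul_pos_of_neg_of_neg this (by linarith)
    constructor
    · intro k hk hD
      rw [aux_deriv_18 b c ξ σ hσ k hk hD]
      apply div_pos
      · have e1 : 0 < -((b + c - 1) / b) := by
          exact neg_pos.mpr (div_neg_of_neg_of_pos (by linarith) hb0)
        have e2 : 0 < b ^ 2 * c := by positivity
        have e3 : 0 < -(b + c - 1) := by linarith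
        have e4 : 0 < k ^ ((b + c - 1) / b - 1) := Real.rpow_pos_of_pos hk _
        nlinarith [mul_pos (mul_pos (mul_pos (mul_pos hA e1) e2) e3) e4]
      · exact pow_two_pos_of_ne_zero hD
    · set p := (b + c - 1) / b with hp
      set A := ξ * (1 - b) * (b + c - 1) with hAdef
      have hu : Tendsto (fun k : ℝ => k ^ p) atTop (nhds 0) := by
        have hnp : 0 < -p := by
          rw [hp]
          exact neg_pos.mpr (div_neg_of_neg_of_pos (by linarith) hb0)
        have := tendsto_rpow_neg_atTop hnp
        simpa [neg_neg] using this
      have hσ' : σ = fun k : ℝ => b * (A * k ^ p + b * c) / (A * (1 - c) * k ^ p + b ^ 2 * c) :=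
        funext fun x => hσ x
      rw [hσ']
      have hden : A * (1 - c) * 0 + b ^ 2 * c ≠ 0 := by
        have : (0:ℝ) < b ^ 2 * c := by positivity
        simpa using this.ne'
      have htend : Tendsto
          (fun k : ℝ => b * (A * k ^ p + b * c) / (A * (1 - c) * k ^ p + b ^ 2 * c))
          atTop (nhds (b * (A * 0 + b * c) / (A * (1 - c) * 0 + b ^ 2 * c))) :=
        Tendsto.div (((hu.const_mul A).add_const (b * c)).const_mul b)
          ((hu.const_mul (A * (1 - c))).add_const (b ^ 2 * c)) hden
      have hval : b * (A * 0 + b * c) / (A * (1 - c) * 0 + b ^ 2 * c) = 1 := by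
        have hb' : b ≠ 0 := hb0.ne'
        have hc' : c ≠ 0 := hc0.ne'
        field_simp
        ring
      rwa [hval] at htend
end

section
/- Let γ > 0, δ ∈ (0, 1), ρ be real constants with δρ ∈ (0, 1) and ρ ≠ 1. Define y(k) = γ·k^{1−δρ}·(1 + (ρ−1)k)^{δρ} on the open interval of k > 0 where 1 + (ρ−1)k > 0 (in particular k < (1−δρ)/(1−ρ) when ρ < 1). Then wherever y'(k) > 0 and y''(k) ≠ 0, the elasticity of factor substitution σ(k) = y'(k)·(k·y'(k) − y(k)) / (k·y(k)·y''(k)) is the linear function σ(k) = 1 + ((ρ−1)/(1−δρ))·k. -/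
open Real Set

/-- The per-capita Sato–Hoffman production function
`y(k) = γ·k^{1-δρ}·(1+(ρ-1)k)^{δρ}` has linear elasticity of factor substitution
`σ(k) = 1 + ((ρ-1)/(1-δρ))k` on the region `k > 0`, `1 + (ρ-1)k > 0`, wherever
`y'(k) > 0` and `y''(k) ≠ 0`. -/
theorem stmt_19 (γ δ ρ : ℝ) (hγ : 0 < γ) (hδ : δ ∈ Ioo (0 : ℝ) 1)
    (hδρ : δ * ρ ∈ Ioo (0 : ℝ) 1) (hρ : ρ ≠ 1)
    (y : ℝ → ℝ)
    (hy : ∀ k : ℝ, y k = γ * k ^ (1 - δ * ρ) * (1 + (ρ - 1) * k) ^ (δ * ρ)) :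
    ∀ k : ℝ, 0 < k → 0 < 1 + (ρ - 1) * k → 0 < deriv y k → deriv (deriv y) k ≠ 0 →
      deriv y k * (k * deriv y k - y k) / (k * y k * deriv (deriv y) k)
        = 1 + (ρ - 1) / (1 - δ * ρ) * k := by
  set a : ℝ := 1 - δ * ρ with ha_def
  set c : ℝ := δ * ρ with hc_def
  set b : ℝ := ρ - 1 with hb_def
  have ha : 0 < a := by have := hδρ.2; simp only [ha_def]; linarith
  have hc : 0 < c := hδρ.1
  set D1 : ℝ → ℝ := fun x => γ * ((a + b * x) * (x ^ (a - 1) * (1 + b * x) ^ (c - 1)))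
    with hD1_def
  set D2 : ℝ → ℝ := fun x => γ * (-(a * c) * (x ^ (a - 2) * (1 + b * x) ^ (c - 2)))
    with hD2_def
  have shift : ∀ (x : ℝ), 0 < x → ∀ s t : ℝ, x ^ s = x ^ t * x ^ (s - t) := by
    intro x hx s t; rw [← Real.rpow_add hx]; congr 1; ring
  have key1 : ∀ k : ℝ, 0 < k → 0 < 1 + b * k → HasDerivAt y (D1 k) k := by
    intro k hk hbk
    have h1 : HasDerivAt (fun x : ℝ => x ^ a) (a * k ^ (a - 1)) k :=
      Real.hasDerivAt_rpow_const (Or.inl hk.ne')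
    have hin : HasDerivAt (fun x : ℝ => 1 + b * x) b k := by
      simpa using ((hasDerivAt_id k).const_mul b).const_add 1
    have h2 : HasDerivAt (fun x : ℝ => (1 + b * x) ^ c)
        (c * (1 + b * k) ^ (c - 1) * b) k := by
      have := (Real.hasDerivAt_rpow_const (x := 1 + b * k) (p := c)
        (Or.inl hbk.ne')).comp k hin
      simpa [mul_comm, mul_assoc, Function.comp_def] using this
    have h3 := (h1.mul h2).const_mul γ
    have hyeq : y = fun x : ℝ => γ * (x ^ a * (1 + b * x) ^ c) := by
      funext x; rw [hy x]; ring
    rw [hyeq]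
    refine h3.congr_deriv ?_
    have e1 : k ^ a = k ^ (a - 1) * k := by
      rw [shift k hk a (a - 1), show a - (a - 1) = (1:ℝ) by ring, Real.rpow_one]
    have e2 : (1 + b * k) ^ c = (1 + b * k) ^ (c - 1) * (1 + b * k) := by
      rw [shift _ hbk c (c - 1), show c - (c - 1) = (1:ℝ) by ring, Real.rpow_one]
    simp only [hD1_def]
    rw [e1, e2]
    simp only [ha_def, hc_def, hb_def]
    ring
  have key2 : ∀ k : ℝ, 0 < k → 0 < 1 + b * k → HasDerivAt D1 (D2 k) k := by
    intro k hk hbk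
    have h1 : HasDerivAt (fun x : ℝ => x ^ (a - 1)) ((a - 1) * k ^ (a - 1 - 1)) k :=
      Real.hasDerivAt_rpow_const (Or.inl hk.ne')
    have hin : HasDerivAt (fun x : ℝ => 1 + b * x) b k := by
      simpa using ((hasDerivAt_id k).const_mul b).const_add 1
    have h2 : HasDerivAt (fun x : ℝ => (1 + b * x) ^ (c - 1))
        ((c - 1) * (1 + b * k) ^ (c - 1 - 1) * b) k := by
      have := (Real.hasDerivAt_rpow_const (x := 1 + b * k) (p := c - 1)
        (Or.inl hbk.ne')).comp k hin
      simpa [mul_comm, mul_assoc, Function.comp_def] using this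
    have hlin : HasDerivAt (fun x : ℝ => a + b * x) b k := by
      simpa using ((hasDerivAt_id k).const_mul b).const_add a
    have h3 := ((hlin.mul (h1.mul h2)).const_mul γ)
    refine h3.congr_deriv ?_
    have e1 : k ^ (a - 1) = k ^ (a - 2) * k := by
      rw [shift k hk (a - 1) (a - 2), show a - 1 - (a - 2) = (1:ℝ) by ring, Real.rpow_one]
    have e2 : (1 + b * k) ^ (c - 1) = (1 + b * k) ^ (c - 2) * (1 + b * k) := by
      rw [shift _ hbk (c - 1) (c - 2), show c - 1 - (c - 2) = (1:ℝ) by ring, Real.rpow_one]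
    have e1' : k ^ (a - 1 - 1) = k ^ (a - 2) := by rw [show a - 1 - 1 = a - 2 by ring]
    have e2' : (1 + b * k) ^ (c - 1 - 1) = (1 + b * k) ^ (c - 2) := by
      rw [show c - 1 - 1 = c - 2 by ring]
    simp only [hD2_def, Pi.mul_apply]
    rw [e1, e2, e1', e2']
    simp only [ha_def, hc_def, hb_def]
    ring
  intro k hk hbk hpos hne
  have hd1 : deriv y k = D1 k := (key1 k hk hbk).deriv
  have hev : deriv y =ᶠ[nhds k] D1 := by
    have hopen : IsOpen {x : ℝ | 0 < x ∧ 0 < 1 + b * x} := by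
      have hs : {x : ℝ | 0 < x ∧ 0 < 1 + b * x}
          = Ioi 0 ∩ (fun x => 1 + b * x) ⁻¹' Ioi 0 := rfl
      rw [hs]
      exact isOpen_Ioi.inter (IsOpen.preimage (by continuity) isOpen_Ioi)
    filter_upwards [hopen.mem_nhds ⟨hk, hbk⟩] with x hx using (key1 x hx.1 hx.2).deriv
  have hd2 : deriv (deriv y) k = D2 k := by
    rw [hev.deriv_eq]; exact (key2 k hk hbk).deriv
  rw [hd1, hd2, hy k]
  have e0 : k ^ a = k ^ (a - 2) * (k * k) := by
    rw [shift k hk a (a - 2), show a - (a - 2) = (2:ℝ) by ring,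
      show (2:ℝ) = 1 + 1 by norm_num, Real.rpow_add hk, Real.rpow_one]
  have e1 : k ^ (a - 1) = k ^ (a - 2) * k := by
    rw [shift k hk (a - 1) (a - 2), show a - 1 - (a - 2) = (1:ℝ) by ring, Real.rpow_one]
  have e0' : (1 + b * k) ^ c = (1 + b * k) ^ (c - 2) * ((1 + b * k) * (1 + b * k)) := by
    rw [shift _ hbk c (c - 2), show c - (c - 2) = (2:ℝ) by ring,
      show (2:ℝ) = 1 + 1 by norm_num, Real.rpow_add hbk, Real.rpow_one]
  have e1' : (1 + b * k) ^ (c - 1) = (1 + b * k) ^ (c - 2) * (1 + b * k) := by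
    rw [shift _ hbk (c - 1) (c - 2), show c - 1 - (c - 2) = (1:ℝ) by ring, Real.rpow_one]
  have hP : (0:ℝ) < k ^ (a - 2) := rpow_pos_of_pos hk _
  have hQ : (0:ℝ) < (1 + b * k) ^ (c - 2) := rpow_pos_of_pos hbk _
  simp only [hD1_def, hD2_def]
  rw [e0, e1, e0', e1']
  have hane : a ≠ 0 := ha.ne'
  field_simp
  simp only [ha_def, hc_def, hb_def]
  ring
end
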